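/- arXiv:2402.12695 — 4 statements merged into one kernel-verified Lean document; each statement's English description precedes it below -/
import Mathlib

section
/- For every m ≥ 3, the graph C_m □_τ C_4 with τ = (0 3)(1 2) is both 2-spanning cyclable and 3-spanning cyclable. -/
open SimpleGraph

/-- `H` is a 2-factor of `X`: a spanning subgraph of `X` (on the same vertex set)
in which every vertex has valency 2. -/
def IsTwoFactor {V : Type*} (X H : SimpleGraph V) : Prop :=
  H ≤ X ∧ ∀ v : V, (H.neighborSet v).ncard = 2

/-- The 2-factor `H` separates the vertex set `A`: every connected component (cycle)
of `H` contains exactly one vertex of `A`; in particular `H` consists of exactly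
`A.card` cycles, each containing exactly one vertex of `A`. -/
def SeparatesSet {V : Type*} (H : SimpleGraph V) (A : Finset V) : Prop :=
  ∀ C : H.ConnectedComponent, ∃! a : V, a ∈ A ∧ H.connectedComponentMk a = C

/-- A graph `X` is `k`-spanning cyclable if for every set `A` of `k` distinct vertices
there is a 2-factor of `X` consisting of `k` cycles such that each vertex of `A`
belongs to a distinct cycle. -/
def SpanningCyclable {V : Type*} (X : SimpleGraph V) (k : ℕ) : Prop :=
  ∀ A : Finset V, A.card = k → ∃ H : SimpleGraph V, IsTwoFactor X H ∧ SeparatesSet H A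

/-- The cycle `C_n` on vertex set `ZMod n`: `x` and `y` are adjacent iff `x - y ∈ {1, -1}`. -/
def cycleZMod (n : ℕ) : SimpleGraph (ZMod n) :=
  SimpleGraph.circulantGraph ({1, -1} : Set (ZMod n))

/-- The pseudo-Cartesian product `C_m □_ℓ C_n`: start with `P_m □ C_n` (columns indexed by
`Fin m`, rows by `ZMod n`) and add the edges from `u_{m-1,j}` to `u_{0,j+ℓ}`.
When `ℓ = 0` this is the Cartesian product `C_m □ C_n`. -/
def pseudoProd (m n : ℕ) (l : ZMod n) : SimpleGraph (Fin m × ZMod n) :=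
  SimpleGraph.fromRel (fun u v =>
    (u.1 = v.1 ∧ v.2 = u.2 + 1) ∨
    ((u.1 : ℕ) + 1 = (v.1 : ℕ) ∧ u.2 = v.2) ∨
    ((u.1 : ℕ) = m - 1 ∧ (v.1 : ℕ) = 0 ∧ v.2 = u.2 + l))

/-- The graph `C_m □_τ C_4` with `τ = (0 3)(1 2)`: start from `P_m □ C_4` and add
the edges from `u_{m-1,j}` to `u_{0,3-j}`. -/
def specialProd (m : ℕ) : SimpleGraph (Fin m × ZMod 4) :=
  SimpleGraph.fromRel (fun u v =>
    (u.1 = v.1 ∧ v.2 = u.2 + 1) ∨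
    ((u.1 : ℕ) + 1 = (v.1 : ℕ) ∧ u.2 = v.2) ∨
    ((u.1 : ℕ) = m - 1 ∧ (v.1 : ℕ) = 0 ∧ v.2 = 3 - u.2))


section Framework

variable {V : Type*}

lemma master (X : SimpleGraph V) (A : Finset V)
    (nxt prv phi : V → V) (g : V → ℕ)
    (h1 : ∀ v, X.Adj v (nxt v))
    (h2 : ∀ v, prv (nxt v) = v)
    (h3 : ∀ v, nxt (prv v) = v)
    (h4 : ∀ v, nxt (nxt v) ≠ v)
    (h5 : ∀ v, phi (nxt v) = phi v)
    (h6 : ∀ v, v ≠ phi v → g (nxt v) < g v)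
    (h7 : ∀ v, phi v ∈ A)
    (h8 : ∀ a ∈ A, phi a = a) :
    ∃ H, IsTwoFactor X H ∧ SeparatesSet H A := by
  classical
  set H : SimpleGraph V := SimpleGraph.fromRel (fun u v => nxt u = v) with hH
  have hnf : ∀ v, nxt v ≠ v := by
    intro v hv
    exact h4 v (by rw [hv, hv])
  have hpf : ∀ v, prv v ≠ v := by
    intro v hv
    have : nxt v = v := by conv_lhs => rw [← hv, h3 v]
    exact hnf v this
  have hnp : ∀ v, nxt v ≠ prv v := by
    intro v hv
    have : nxt (nxt v) = v := by rw [hv, h3 v]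
    exact h4 v this
  have adj_iff : ∀ u w, H.Adj u w ↔ u ≠ w ∧ (nxt u = w ∨ nxt w = u) := by
    intro u w
    rw [hH, SimpleGraph.fromRel_adj]
  have hHX : H ≤ X := by
    intro u w h
    rw [adj_iff] at h
    rcases h.2 with h' | h'
    · exact h' ▸ h1 u
    · exact (h' ▸ h1 w).symm
  have hnb : ∀ v, H.neighborSet v = {nxt v, prv v} := by
    intro v
    ext w
    simp only [mem_neighborSet, Set.mem_insert_iff, Set.mem_singleton_iff, adj_iff]
    constructor
    · rintro ⟨hne, h' | h'⟩
      · exact Or.inl h'.symm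
      · right; rw [← h', h2]
    · rintro (rfl | rfl)
      · exact ⟨(hnf v).symm, Or.inl rfl⟩
      · exact ⟨(hpf v).symm, Or.inr (h3 v)⟩
  have hdeg : ∀ v, (H.neighborSet v).ncard = 2 := by
    intro v
    rw [hnb v]
    exact Set.ncard_pair (hnp v)
  have hadj_phi : ∀ u w, H.Adj u w → phi u = phi w := by
    intro u w h
    rw [adj_iff] at h
    rcases h.2 with h' | h'
    · rw [← h', h5]
    · rw [← h', h5]
  have hreach_phi : ∀ u w, H.Reachable u w → phi u = phi w := by
    intro u w h
    obtain ⟨p⟩ := h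
    induction p with
    | nil => rfl
    | cons h _ ih => exact (hadj_phi _ _ h).trans ih
  have reach : ∀ n v, g v ≤ n → H.Reachable v (phi v) := by
    intro n
    induction n with
    | zero =>
      intro v hv
      by_cases he : v = phi v
      · exact he ▸ Reachable.refl v
      · exact absurd (h6 v he) (by omega)
    | succ n ih =>
      intro v hv
      by_cases he : v = phi v
      · exact he ▸ Reachable.refl v
      · have hadj : H.Adj v (nxt v) := by
          rw [adj_iff]
          exact ⟨(hnf v).symm, Or.inl rfl⟩
        have := ih (nxt v) (by have := h6 v he; omega)
        rw [h5 v] at this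
        exact hadj.reachable.trans this
  refine ⟨H, ⟨hHX, hdeg⟩, ?_⟩
  intro C
  obtain ⟨v, rfl⟩ := C.exists_rep
  refine ⟨phi v, ⟨h7 v, ?_⟩, ?_⟩
  · exact ConnectedComponent.eq.mpr (reach (g v) v le_rfl).symm
  · rintro y ⟨hyA, hyC⟩
    have hr : H.Reachable y v := ConnectedComponent.eq.mp hyC
    have := hreach_phi y v hr
    rw [h8 y hyA] at this
    exact this

end Framework
section Assemble

variable {V : Type*}

/-- cyclic successor -/
def csucc (L i : ℕ) : ℕ := if i + 1 = L then 0 else i + 1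

/-- cyclic predecessor -/
def cpred (L i : ℕ) : ℕ := if i = 0 then L - 1 else i - 1

/-- wrap-around distance from `i` to `q` -/
def cdist (L q i : ℕ) : ℕ := if i ≤ q then q - i else q + L - i

lemma assemble3 [DecidableEq V] (X : SimpleGraph V) (A : Finset V)
    (L1 L2 L3 : ℕ) (e1 e2 e3 : ℕ → V) (a1 a2 a3 : V)
    (hL1 : 3 ≤ L1) (hL2 : 3 ≤ L2) (hL3 : 3 ≤ L3)
    (hadj1 : ∀ i, i < L1 → X.Adj (e1 i) (e1 (csucc L1 i)))
    (hadj2 : ∀ i, i < L2 → X.Adj (e2 i) (e2 (csucc L2 i)))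
    (hadj3 : ∀ i, i < L3 → X.Adj (e3 i) (e3 (csucc L3 i)))
    (hinj1 : ∀ i j, i < L1 → j < L1 → e1 i = e1 j → i = j)
    (hinj2 : ∀ i j, i < L2 → j < L2 → e2 i = e2 j → i = j)
    (hinj3 : ∀ i j, i < L3 → j < L3 → e3 i = e3 j → i = j)
    (h12 : ∀ i j, i < L1 → j < L2 → e1 i ≠ e2 j)
    (h13 : ∀ i j, i < L1 → j < L3 → e1 i ≠ e3 j)
    (h23 : ∀ i j, i < L2 → j < L3 → e2 i ≠ e3 j)
    (hcov : ∀ v, (∃ i, i < L1 ∧ e1 i = v) ∨ (∃ i, i < L2 ∧ e2 i = v) ∨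
      (∃ i, i < L3 ∧ e3 i = v))
    (ha1 : ∃ i, i < L1 ∧ e1 i = a1) (ha2 : ∃ i, i < L2 ∧ e2 i = a2)
    (ha3 : ∃ i, i < L3 ∧ e3 i = a3)
    (hA : A = {a1, a2, a3}) :
    ∃ H, IsTwoFactor X H ∧ SeparatesSet H A := by
  classical
  obtain ⟨q1, hq1, hq1e⟩ := ha1
  obtain ⟨q2, hq2, hq2e⟩ := ha2
  obtain ⟨q3, hq3, hq3e⟩ := ha3
  set P1 : V → Prop := fun v => ∃ i, i < L1 ∧ e1 i = v with hP1
  set P2 : V → Prop := fun v => ∃ i, i < L2 ∧ e2 i = v with hP2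
  set P3 : V → Prop := fun v => ∃ i, i < L3 ∧ e3 i = v with hP3
  set nxt : V → V := fun v =>
    if h : P1 v then e1 (csucc L1 h.choose)
    else if h : P2 v then e2 (csucc L2 h.choose)
    else if h : P3 v then e3 (csucc L3 h.choose) else v with hnxt
  set prv : V → V := fun v =>
    if h : P1 v then e1 (cpred L1 h.choose)
    else if h : P2 v then e2 (cpred L2 h.choose)
    else if h : P3 v then e3 (cpred L3 h.choose) else v with hprv
  set phi : V → V := fun v =>
    if P1 v then a1 else if P2 v then a2 else if P3 v then a3 else v with hphi
  set g : V → ℕ := fun v =>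
    if h : P1 v then cdist L1 q1 h.choose
    else if h : P2 v then cdist L2 q2 h.choose
    else if h : P3 v then cdist L3 q3 h.choose else 0 with hg
  -- basic facts about membership
  have m1 : ∀ i, i < L1 → P1 (e1 i) := fun i hi => ⟨i, hi, rfl⟩
  have m2 : ∀ i, i < L2 → P2 (e2 i) := fun i hi => ⟨i, hi, rfl⟩
  have m3 : ∀ i, i < L3 → P3 (e3 i) := fun i hi => ⟨i, hi, rfl⟩
  have n12 : ∀ i, i < L2 → ¬ P1 (e2 i) := by
    rintro i hi ⟨j, hj, hje⟩; exact h12 j i hj hi hje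
  have n13 : ∀ i, i < L3 → ¬ P1 (e3 i) := by
    rintro i hi ⟨j, hj, hje⟩; exact h13 j i hj hi hje
  have n23 : ∀ i, i < L3 → ¬ P2 (e3 i) := by
    rintro i hi ⟨j, hj, hje⟩; exact h23 j i hj hi hje
  have c1 : ∀ i (hi : i < L1) (h : P1 (e1 i)), h.choose = i := by
    intro i hi h
    exact hinj1 _ _ h.choose_spec.1 hi h.choose_spec.2
  have c2 : ∀ i (hi : i < L2) (h : P2 (e2 i)), h.choose = i := by
    intro i hi h
    exact hinj2 _ _ h.choose_spec.1 hi h.choose_spec.2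
  have c3 : ∀ i (hi : i < L3) (h : P3 (e3 i)), h.choose = i := by
    intro i hi h
    exact hinj3 _ _ h.choose_spec.1 hi h.choose_spec.2
  -- evaluation lemmas
  have nxt1 : ∀ i, i < L1 → nxt (e1 i) = e1 (csucc L1 i) := by
    intro i hi
    rw [hnxt]
    simp only
    rw [dif_pos (m1 i hi), c1 i hi]
  have nxt2 : ∀ i, i < L2 → nxt (e2 i) = e2 (csucc L2 i) := by
    intro i hi
    rw [hnxt]
    simp only
    rw [dif_neg (n12 i hi), dif_pos (m2 i hi), c2 i hi]
  have nxt3 : ∀ i, i < L3 → nxt (e3 i) = e3 (csucc L3 i) := by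
    intro i hi
    rw [hnxt]
    simp only
    rw [dif_neg (n13 i hi), dif_neg (n23 i hi), dif_pos (m3 i hi), c3 i hi]
  have prv1 : ∀ i, i < L1 → prv (e1 i) = e1 (cpred L1 i) := by
    intro i hi
    rw [hprv]; simp only
    rw [dif_pos (m1 i hi), c1 i hi]
  have prv2 : ∀ i, i < L2 → prv (e2 i) = e2 (cpred L2 i) := by
    intro i hi
    rw [hprv]; simp only
    rw [dif_neg (n12 i hi), dif_pos (m2 i hi), c2 i hi]
  have prv3 : ∀ i, i < L3 → prv (e3 i) = e3 (cpred L3 i) := by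
    intro i hi
    rw [hprv]; simp only
    rw [dif_neg (n13 i hi), dif_neg (n23 i hi), dif_pos (m3 i hi), c3 i hi]
  have phi1 : ∀ i, i < L1 → phi (e1 i) = a1 := by
    intro i hi
    rw [hphi]; simp only
    rw [if_pos (m1 i hi)]
  have phi2 : ∀ i, i < L2 → phi (e2 i) = a2 := by
    intro i hi
    rw [hphi]; simp only
    rw [if_neg (n12 i hi), if_pos (m2 i hi)]
  have phi3 : ∀ i, i < L3 → phi (e3 i) = a3 := by
    intro i hi
    rw [hphi]; simp only
    rw [if_neg (n13 i hi), if_neg (n23 i hi), if_pos (m3 i hi)]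
  have g1 : ∀ i, i < L1 → g (e1 i) = cdist L1 q1 i := by
    intro i hi
    rw [hg]; simp only
    rw [dif_pos (m1 i hi), c1 i hi]
  have g2 : ∀ i, i < L2 → g (e2 i) = cdist L2 q2 i := by
    intro i hi
    rw [hg]; simp only
    rw [dif_neg (n12 i hi), dif_pos (m2 i hi), c2 i hi]
  have g3 : ∀ i, i < L3 → g (e3 i) = cdist L3 q3 i := by
    intro i hi
    rw [hg]; simp only
    rw [dif_neg (n13 i hi), dif_neg (n23 i hi), dif_pos (m3 i hi), c3 i hi]
  have hsucc_lt : ∀ L i, i < L → csucc L i < L := by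
    intro L i hi; unfold csucc; split <;> omega
  have hps : ∀ L i, 0 < L → i < L → cpred L (csucc L i) = i := by
    intro L i h0 hi; unfold csucc cpred; split <;> split <;> omega
  have hsp : ∀ L i, 0 < L → i < L → csucc L (cpred L i) = i := by
    intro L i h0 hi; unfold csucc cpred; split <;> split <;> omega
  have hss : ∀ L i, 3 ≤ L → i < L → csucc L (csucc L i) ≠ i := by
    intro L i h0 hi; simp only [csucc]; split_ifs <;> omega
  have hcd : ∀ L q i, q < L → i < L → i ≠ q → cdist L q (csucc L i) < cdist L q i := by
    intro L q i hq hi hne; simp only [csucc, cdist]; split_ifs <;> omega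
  have hpred_lt : ∀ L i, 0 < L → i < L → cpred L i < L := by
    intro L i h0 hi; unfold cpred; split <;> omega
  apply master X A nxt prv phi g
  · intro v
    rcases hcov v with ⟨i, hi, rfl⟩ | ⟨i, hi, rfl⟩ | ⟨i, hi, rfl⟩
    · rw [nxt1 i hi]; exact hadj1 i hi
    · rw [nxt2 i hi]; exact hadj2 i hi
    · rw [nxt3 i hi]; exact hadj3 i hi
  · intro v
    rcases hcov v with ⟨i, hi, rfl⟩ | ⟨i, hi, rfl⟩ | ⟨i, hi, rfl⟩
    · rw [nxt1 i hi, prv1 _ (hsucc_lt _ _ hi), hps _ _ (by omega) hi]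
    · rw [nxt2 i hi, prv2 _ (hsucc_lt _ _ hi), hps _ _ (by omega) hi]
    · rw [nxt3 i hi, prv3 _ (hsucc_lt _ _ hi), hps _ _ (by omega) hi]
  · intro v
    rcases hcov v with ⟨i, hi, rfl⟩ | ⟨i, hi, rfl⟩ | ⟨i, hi, rfl⟩
    · rw [prv1 i hi, nxt1 _ (hpred_lt _ _ (by omega) hi), hsp _ _ (by omega) hi]
    · rw [prv2 i hi, nxt2 _ (hpred_lt _ _ (by omega) hi), hsp _ _ (by omega) hi]
    · rw [prv3 i hi, nxt3 _ (hpred_lt _ _ (by omega) hi), hsp _ _ (by omega) hi]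
  · intro v
    rcases hcov v with ⟨i, hi, rfl⟩ | ⟨i, hi, rfl⟩ | ⟨i, hi, rfl⟩
    · rw [nxt1 i hi, nxt1 _ (hsucc_lt _ _ hi)]
      intro h
      exact hss _ _ hL1 hi (hinj1 _ _ (hsucc_lt _ _ (hsucc_lt _ _ hi)) hi h)
    · rw [nxt2 i hi, nxt2 _ (hsucc_lt _ _ hi)]
      intro h
      exact hss _ _ hL2 hi (hinj2 _ _ (hsucc_lt _ _ (hsucc_lt _ _ hi)) hi h)
    · rw [nxt3 i hi, nxt3 _ (hsucc_lt _ _ hi)]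
      intro h
      exact hss _ _ hL3 hi (hinj3 _ _ (hsucc_lt _ _ (hsucc_lt _ _ hi)) hi h)
  · intro v
    rcases hcov v with ⟨i, hi, rfl⟩ | ⟨i, hi, rfl⟩ | ⟨i, hi, rfl⟩
    · rw [nxt1 i hi, phi1 _ (hsucc_lt _ _ hi), phi1 i hi]
    · rw [nxt2 i hi, phi2 _ (hsucc_lt _ _ hi), phi2 i hi]
    · rw [nxt3 i hi, phi3 _ (hsucc_lt _ _ hi), phi3 i hi]
  · intro v hv
    rcases hcov v with ⟨i, hi, rfl⟩ | ⟨i, hi, rfl⟩ | ⟨i, hi, rfl⟩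
    · rw [phi1 i hi] at hv
      rw [nxt1 i hi, g1 _ (hsucc_lt _ _ hi), g1 i hi]
      refine hcd _ _ _ hq1 hi ?_
      rintro rfl
      exact hv hq1e
    · rw [phi2 i hi] at hv
      rw [nxt2 i hi, g2 _ (hsucc_lt _ _ hi), g2 i hi]
      refine hcd _ _ _ hq2 hi ?_
      rintro rfl
      exact hv hq2e
    · rw [phi3 i hi] at hv
      rw [nxt3 i hi, g3 _ (hsucc_lt _ _ hi), g3 i hi]
      refine hcd _ _ _ hq3 hi ?_
      rintro rfl
      exact hv hq3e
  · intro v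
    rcases hcov v with ⟨i, hi, rfl⟩ | ⟨i, hi, rfl⟩ | ⟨i, hi, rfl⟩
    · rw [phi1 i hi, hA]; simp
    · rw [phi2 i hi, hA]; simp
    · rw [phi3 i hi, hA]; simp
  · intro a ha
    rw [hA] at ha
    simp only [Finset.mem_insert, Finset.mem_singleton] at ha
    rcases ha with rfl | rfl | rfl
    · rw [← hq1e, phi1 _ hq1, hq1e]
    · rw [← hq2e, phi2 _ hq2, hq2e]
    · rw [← hq3e, phi3 _ hq3, hq3e]

lemma assemble2 [DecidableEq V] (X : SimpleGraph V) (A : Finset V)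
    (L1 L2 : ℕ) (e1 e2 : ℕ → V) (a1 a2 : V)
    (hL1 : 3 ≤ L1) (hL2 : 3 ≤ L2)
    (hadj1 : ∀ i, i < L1 → X.Adj (e1 i) (e1 (csucc L1 i)))
    (hadj2 : ∀ i, i < L2 → X.Adj (e2 i) (e2 (csucc L2 i)))
    (hinj1 : ∀ i j, i < L1 → j < L1 → e1 i = e1 j → i = j)
    (hinj2 : ∀ i j, i < L2 → j < L2 → e2 i = e2 j → i = j)
    (h12 : ∀ i j, i < L1 → j < L2 → e1 i ≠ e2 j)
    (hcov : ∀ v, (∃ i, i < L1 ∧ e1 i = v) ∨ (∃ i, i < L2 ∧ e2 i = v))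
    (ha1 : ∃ i, i < L1 ∧ e1 i = a1) (ha2 : ∃ i, i < L2 ∧ e2 i = a2)
    (hA : A = {a1, a2}) :
    ∃ H, IsTwoFactor X H ∧ SeparatesSet H A := by
  classical
  obtain ⟨q1, hq1, hq1e⟩ := ha1
  obtain ⟨q2, hq2, hq2e⟩ := ha2
  set P1 : V → Prop := fun v => ∃ i, i < L1 ∧ e1 i = v with hP1
  set P2 : V → Prop := fun v => ∃ i, i < L2 ∧ e2 i = v with hP2
  set nxt : V → V := fun v =>
    if h : P1 v then e1 (csucc L1 h.choose)
    else if h : P2 v then e2 (csucc L2 h.choose) else v with hnxt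
  set prv : V → V := fun v =>
    if h : P1 v then e1 (cpred L1 h.choose)
    else if h : P2 v then e2 (cpred L2 h.choose) else v with hprv
  set phi : V → V := fun v =>
    if P1 v then a1 else if P2 v then a2 else v with hphi
  set g : V → ℕ := fun v =>
    if h : P1 v then cdist L1 q1 h.choose
    else if h : P2 v then cdist L2 q2 h.choose else 0 with hg
  have m1 : ∀ i, i < L1 → P1 (e1 i) := fun i hi => ⟨i, hi, rfl⟩
  have m2 : ∀ i, i < L2 → P2 (e2 i) := fun i hi => ⟨i, hi, rfl⟩
  have n12 : ∀ i, i < L2 → ¬ P1 (e2 i) := by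
    rintro i hi ⟨j, hj, hje⟩; exact h12 j i hj hi hje
  have c1 : ∀ i (hi : i < L1) (h : P1 (e1 i)), h.choose = i := by
    intro i hi h
    exact hinj1 _ _ h.choose_spec.1 hi h.choose_spec.2
  have c2 : ∀ i (hi : i < L2) (h : P2 (e2 i)), h.choose = i := by
    intro i hi h
    exact hinj2 _ _ h.choose_spec.1 hi h.choose_spec.2
  have nxt1 : ∀ i, i < L1 → nxt (e1 i) = e1 (csucc L1 i) := by
    intro i hi
    rw [hnxt]; simp only
    rw [dif_pos (m1 i hi), c1 i hi]
  have nxt2 : ∀ i, i < L2 → nxt (e2 i) = e2 (csucc L2 i) := by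
    intro i hi
    rw [hnxt]; simp only
    rw [dif_neg (n12 i hi), dif_pos (m2 i hi), c2 i hi]
  have prv1 : ∀ i, i < L1 → prv (e1 i) = e1 (cpred L1 i) := by
    intro i hi
    rw [hprv]; simp only
    rw [dif_pos (m1 i hi), c1 i hi]
  have prv2 : ∀ i, i < L2 → prv (e2 i) = e2 (cpred L2 i) := by
    intro i hi
    rw [hprv]; simp only
    rw [dif_neg (n12 i hi), dif_pos (m2 i hi), c2 i hi]
  have phi1 : ∀ i, i < L1 → phi (e1 i) = a1 := by
    intro i hi
    rw [hphi]; simp only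
    rw [if_pos (m1 i hi)]
  have phi2 : ∀ i, i < L2 → phi (e2 i) = a2 := by
    intro i hi
    rw [hphi]; simp only
    rw [if_neg (n12 i hi), if_pos (m2 i hi)]
  have g1 : ∀ i, i < L1 → g (e1 i) = cdist L1 q1 i := by
    intro i hi
    rw [hg]; simp only
    rw [dif_pos (m1 i hi), c1 i hi]
  have g2 : ∀ i, i < L2 → g (e2 i) = cdist L2 q2 i := by
    intro i hi
    rw [hg]; simp only
    rw [dif_neg (n12 i hi), dif_pos (m2 i hi), c2 i hi]
  have hsucc_lt : ∀ L i, i < L → csucc L i < L := by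
    intro L i hi; unfold csucc; split <;> omega
  have hps : ∀ L i, 0 < L → i < L → cpred L (csucc L i) = i := by
    intro L i h0 hi; unfold csucc cpred; split <;> split <;> omega
  have hsp : ∀ L i, 0 < L → i < L → csucc L (cpred L i) = i := by
    intro L i h0 hi; unfold csucc cpred; split <;> split <;> omega
  have hss : ∀ L i, 3 ≤ L → i < L → csucc L (csucc L i) ≠ i := by
    intro L i h0 hi; simp only [csucc]; split_ifs <;> omega
  have hcd : ∀ L q i, q < L → i < L → i ≠ q → cdist L q (csucc L i) < cdist L q i := by
    intro L q i hq hi hne; simp only [csucc, cdist]; split_ifs <;> omega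
  have hpred_lt : ∀ L i, 0 < L → i < L → cpred L i < L := by
    intro L i h0 hi; unfold cpred; split <;> omega
  apply master X A nxt prv phi g
  · intro v
    rcases hcov v with ⟨i, hi, rfl⟩ | ⟨i, hi, rfl⟩
    · rw [nxt1 i hi]; exact hadj1 i hi
    · rw [nxt2 i hi]; exact hadj2 i hi
  · intro v
    rcases hcov v with ⟨i, hi, rfl⟩ | ⟨i, hi, rfl⟩
    · rw [nxt1 i hi, prv1 _ (hsucc_lt _ _ hi), hps _ _ (by omega) hi]
    · rw [nxt2 i hi, prv2 _ (hsucc_lt _ _ hi), hps _ _ (by omega) hi]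
  · intro v
    rcases hcov v with ⟨i, hi, rfl⟩ | ⟨i, hi, rfl⟩
    · rw [prv1 i hi, nxt1 _ (hpred_lt _ _ (by omega) hi), hsp _ _ (by omega) hi]
    · rw [prv2 i hi, nxt2 _ (hpred_lt _ _ (by omega) hi), hsp _ _ (by omega) hi]
  · intro v
    rcases hcov v with ⟨i, hi, rfl⟩ | ⟨i, hi, rfl⟩
    · rw [nxt1 i hi, nxt1 _ (hsucc_lt _ _ hi)]
      intro h
      exact hss _ _ hL1 hi (hinj1 _ _ (hsucc_lt _ _ (hsucc_lt _ _ hi)) hi h)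
    · rw [nxt2 i hi, nxt2 _ (hsucc_lt _ _ hi)]
      intro h
      exact hss _ _ hL2 hi (hinj2 _ _ (hsucc_lt _ _ (hsucc_lt _ _ hi)) hi h)
  · intro v
    rcases hcov v with ⟨i, hi, rfl⟩ | ⟨i, hi, rfl⟩
    · rw [nxt1 i hi, phi1 _ (hsucc_lt _ _ hi), phi1 i hi]
    · rw [nxt2 i hi, phi2 _ (hsucc_lt _ _ hi), phi2 i hi]
  · intro v hv
    rcases hcov v with ⟨i, hi, rfl⟩ | ⟨i, hi, rfl⟩
    · rw [phi1 i hi] at hv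
      rw [nxt1 i hi, g1 _ (hsucc_lt _ _ hi), g1 i hi]
      refine hcd _ _ _ hq1 hi ?_
      rintro rfl
      exact hv hq1e
    · rw [phi2 i hi] at hv
      rw [nxt2 i hi, g2 _ (hsucc_lt _ _ hi), g2 i hi]
      refine hcd _ _ _ hq2 hi ?_
      rintro rfl
      exact hv hq2e
  · intro v
    rcases hcov v with ⟨i, hi, rfl⟩ | ⟨i, hi, rfl⟩
    · rw [phi1 i hi, hA]; simp
    · rw [phi2 i hi, hA]; simp
  · intro a ha
    rw [hA] at ha
    simp only [Finset.mem_insert, Finset.mem_singleton] at ha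
    rcases ha with rfl | rfl
    · rw [← hq1e, phi1 _ hq1, hq1e]
    · rw [← hq2e, phi2 _ hq2, hq2e]

end Assemble

section Pieces

/-- make a column index -/
def fc (m : ℕ) (h0 : 0 < m) (x : ℕ) : Fin m := ⟨x % m, Nat.mod_lt x h0⟩

lemma fc_val {m : ℕ} (h0 : 0 < m) {x : ℕ} (hx : x < m) : (fc m h0 x).val = x :=
  Nat.mod_eq_of_lt hx

lemma fc_self {m : ℕ} (h0 : 0 < m) (c : Fin m) : fc m h0 c.val = c := by
  apply Fin.ext
  exact fc_val h0 c.isLt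

lemma pair_eq {m : ℕ} (h0 : 0 < m) {a b : ℕ} (ha : a < m) (hb : b < m) {ra rb : ZMod 4} :
    ((fc m h0 a, ra) : Fin m × ZMod 4) = (fc m h0 b, rb) ↔ a = b ∧ ra = rb := by
  constructor
  · intro h
    have h1 := congrArg (fun v => (v.1 : Fin m).val) h
    have h2 := congrArg Prod.snd h
    simp only [fc_val h0 ha, fc_val h0 hb] at h1
    exact ⟨h1, h2⟩
  · rintro ⟨rfl, rfl⟩; rfl

lemma zr_cases : ∀ r : ZMod 4, r = 0 ∨ r = 1 ∨ r = 2 ∨ r = 3 := by decide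

lemma zr_ne_succ : ∀ r : ZMod 4, r ≠ r + 1 := by decide

lemma adj_h {m : ℕ} (h0 : 0 < m) (x y : ℕ) (r : ZMod 4) (hx : x < m) (hy : y < m)
    (hxy : x + 1 = y) : (specialProd m).Adj (fc m h0 x, r) (fc m h0 y, r) := by
  rw [specialProd, SimpleGraph.fromRel_adj]
  constructor
  · intro h
    rw [pair_eq h0 hx hy] at h
    omega
  · refine Or.inl (Or.inr (Or.inl ⟨?_, rfl⟩))
    simp only [fc_val h0 hx, fc_val h0 hy]
    exact hxy

lemma adj_v {m : ℕ} (h0 : 0 < m) (x : ℕ) (hx : x < m) (r r' : ZMod 4) (h : r' = r + 1) :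
    (specialProd m).Adj (fc m h0 x, r) (fc m h0 x, r') := by
  rw [specialProd, SimpleGraph.fromRel_adj]
  constructor
  · intro hh
    rw [pair_eq h0 hx hx] at hh
    exact zr_ne_succ r (hh.2.trans h)
  · exact Or.inl (Or.inl ⟨rfl, h⟩)

lemma adj_v' {m : ℕ} (h0 : 0 < m) (x : ℕ) (hx : x < m) (r r' : ZMod 4) (h : r = r' + 1) :
    (specialProd m).Adj (fc m h0 x, r) (fc m h0 x, r') :=
  (adj_v h0 x hx r' r h).symm

lemma adj_t {m : ℕ} (h0 : 0 < m) (hm : 3 ≤ m) (r r' : ZMod 4) (h : r' = 3 - r) :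
    (specialProd m).Adj (fc m h0 (m-1), r) (fc m h0 0, r') := by
  rw [specialProd, SimpleGraph.fromRel_adj]
  constructor
  · intro hh
    rw [pair_eq h0 (by omega) (by omega)] at hh
    omega
  · refine Or.inl (Or.inr (Or.inr ⟨?_, ?_, h⟩)) <;>
      simp only [fc_val h0 (show m - 1 < m by omega), fc_val h0 (show 0 < m by omega)]

lemma adj_t' {m : ℕ} (h0 : 0 < m) (hm : 3 ≤ m) (r r' : ZMod 4) (h : r' = 3 - r) :
    (specialProd m).Adj (fc m h0 0, r') (fc m h0 (m-1), r) :=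
  (adj_t h0 hm r r' h).symm

/-! ### Rectangle piece: rows `{p, p+1}` on columns `[s..t]` -/

def eRect (m : ℕ) (h0 : 0 < m) (p : ZMod 4) (s t : ℕ) (i : ℕ) : Fin m × ZMod 4 :=
  if i ≤ t - s then (fc m h0 (s + i), p) else (fc m h0 (t - (i - (t - s + 1))), p + 1)

lemma rect_L3 (s t : ℕ) (hst : s < t) : 3 ≤ 2 * (t - s + 1) := by omega

lemma rect_adj {m : ℕ} (h0 : 0 < m) (p : ZMod 4) (s t : ℕ) (hst : s < t) (htm : t < m) :
    ∀ i, i < 2 * (t - s + 1) →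
      (specialProd m).Adj (eRect m h0 p s t i) (eRect m h0 p s t (csucc (2 * (t - s + 1)) i)) := by
  intro i hi
  have hs : csucc (2 * (t - s + 1)) i = if i + 1 = 2 * (t - s + 1) then 0 else i + 1 := rfl
  rcases Nat.lt_or_ge i (t - s) with h1 | h1
  · rw [hs, if_neg (by omega)]
    rw [eRect, eRect, if_pos (by omega), if_pos (by omega)]
    exact adj_h h0 _ _ p (by omega) (by omega) (by omega)
  rcases Nat.eq_or_lt_of_le h1 with h2 | h2
  · rw [hs, if_neg (by omega)]
    rw [eRect, eRect, if_pos (by omega), if_neg (by omega)]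
    have c1 : s + i = t := by omega
    have c2 : t - (i + 1 - (t - s + 1)) = t := by omega
    rw [c1, c2]
    exact adj_v h0 t htm p (p+1) rfl
  rcases Nat.lt_or_ge (i+1) (2 * (t - s + 1)) with h3 | h3
  · rw [hs, if_neg (by omega)]
    rw [eRect, eRect, if_neg (by omega), if_neg (by omega)]
    apply SimpleGraph.Adj.symm
    exact adj_h h0 _ _ (p+1) (by omega) (by omega) (by omega)
  · rw [hs, if_pos (by omega)]
    rw [eRect, eRect, if_neg (by omega), if_pos (by omega)]
    have c1 : t - (i - (t - s + 1)) = s := by omega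
    have c2 : s + 0 = s := by omega
    rw [c1, c2]
    exact adj_v' h0 s (by omega) (p+1) p rfl

lemma rect_inj {m : ℕ} (h0 : 0 < m) (p : ZMod 4) (s t : ℕ) (hst : s < t) (htm : t < m) :
    ∀ i j, i < 2 * (t - s + 1) → j < 2 * (t - s + 1) →
      eRect m h0 p s t i = eRect m h0 p s t j → i = j := by
  intro i j hi hj he
  have hpp : p ≠ p + 1 := zr_ne_succ p
  rw [eRect, eRect] at he
  split_ifs at he with a b b
  · rw [pair_eq h0 (by omega) (by omega)] at he; omega
  · rw [pair_eq h0 (by omega) (by omega)] at he; exact absurd he.2 hpp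
  · rw [pair_eq h0 (by omega) (by omega)] at he; exact absurd he.2.symm hpp
  · rw [pair_eq h0 (by omega) (by omega)] at he; omega

lemma rect_mem {m : ℕ} (h0 : 0 < m) (p : ZMod 4) (s t : ℕ) (hst : s < t) (htm : t < m) :
    ∀ i, i < 2 * (t - s + 1) → ∃ x r, eRect m h0 p s t i = (fc m h0 x, r) ∧
      s ≤ x ∧ x ≤ t ∧ (r = p ∨ r = p + 1) := by
  intro i hi
  rw [eRect]
  split_ifs with a
  · exact ⟨s + i, p, rfl, by omega, by omega, Or.inl rfl⟩
  · exact ⟨t - (i - (t - s + 1)), p + 1, rfl, by omega, by omega, Or.inr rfl⟩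

lemma rect_cov {m : ℕ} (h0 : 0 < m) (p : ZMod 4) (s t : ℕ) (hst : s < t) (htm : t < m)
    (c : ℕ) (r : ZMod 4) (hsc : s ≤ c) (hct : c ≤ t) (hr : r = p ∨ r = p + 1) :
    ∃ i, i < 2 * (t - s + 1) ∧ eRect m h0 p s t i = (fc m h0 c, r) := by
  rcases hr with rfl | rfl
  · refine ⟨c - s, by omega, ?_⟩
    rw [eRect, if_pos (by omega)]
    rw [pair_eq h0 (by omega) (by omega)]
    exact ⟨by omega, rfl⟩
  · refine ⟨(t - s + 1) + (t - c), by omega, ?_⟩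
    rw [eRect, if_neg (by omega)]
    rw [pair_eq h0 (by omega) (by omega)]
    exact ⟨by omega, rfl⟩

end Pieces

section Pieces2

lemma zr_tv : ∀ r : ZMod 4, 3 - r = r + 1 ∨ r = (3 - r) + 1 := by decide

lemma zr_ne_tv : ∀ r : ZMod 4, r ≠ 3 - r := by decide

lemma zr_33 : ∀ r : ZMod 4, r = 3 - (3 - r) := by decide

/-! ### Column piece: all four rows on column `c` -/

def eCol (m : ℕ) (h0 : 0 < m) (c : ℕ) (i : ℕ) : Fin m × ZMod 4 := (fc m h0 c, (i : ZMod 4))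

lemma col_adj {m : ℕ} (h0 : 0 < m) (c : ℕ) (hc : c < m) :
    ∀ i, i < 4 → (specialProd m).Adj (eCol m h0 c i) (eCol m h0 c (csucc 4 i)) := by
  intro i hi
  interval_cases i <;> simp only [eCol, csucc] <;> norm_num <;>
    exact adj_v h0 c hc _ _ (by decide)

lemma col_inj {m : ℕ} (h0 : 0 < m) (c : ℕ) (hc : c < m) :
    ∀ i j, i < 4 → j < 4 → eCol m h0 c i = eCol m h0 c j → i = j := by
  intro i j hi hj he
  rw [eCol, eCol, pair_eq h0 hc hc] at he
  have := he.2
  interval_cases i <;> interval_cases j <;> revert this <;> decide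

lemma col_mem {m : ℕ} (h0 : 0 < m) (c : ℕ) (hc : c < m) :
    ∀ i, i < 4 → ∃ x r, eCol m h0 c i = (fc m h0 x, r) ∧ x = c := by
  intro i hi
  exact ⟨c, (i : ZMod 4), rfl, rfl⟩

lemma col_cov {m : ℕ} (h0 : 0 < m) (c : ℕ) (hc : c < m) (r : ZMod 4) :
    ∃ i, i < 4 ∧ eCol m h0 c i = (fc m h0 c, r) := by
  rcases zr_cases r with rfl | rfl | rfl | rfl
  · exact ⟨0, by omega, by rw [eCol, pair_eq h0 hc hc]; exact ⟨rfl, by decide⟩⟩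
  · exact ⟨1, by omega, by rw [eCol, pair_eq h0 hc hc]; exact ⟨rfl, by decide⟩⟩
  · exact ⟨2, by omega, by rw [eCol, pair_eq h0 hc hc]; exact ⟨rfl, by decide⟩⟩
  · exact ⟨3, by omega, by rw [eCol, pair_eq h0 hc hc]; exact ⟨rfl, by decide⟩⟩

/-! ### Right loop: row `r` on all columns plus the vertex `(m-1, 3-r)` -/

def eLoopR (m : ℕ) (h0 : 0 < m) (r : ZMod 4) (i : ℕ) : Fin m × ZMod 4 :=
  if i < m then (fc m h0 i, r) else (fc m h0 (m - 1), 3 - r)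

lemma loopR_adj {m : ℕ} (h0 : 0 < m) (hm : 3 ≤ m) (r : ZMod 4) :
    ∀ i, i < m + 1 → (specialProd m).Adj (eLoopR m h0 r i) (eLoopR m h0 r (csucc (m+1) i)) := by
  intro i hi
  have hs : csucc (m+1) i = if i + 1 = m + 1 then 0 else i + 1 := rfl
  rcases Nat.lt_or_ge (i+1) m with h1 | h1
  · rw [hs, if_neg (by omega), eLoopR, eLoopR, if_pos (by omega), if_pos (by omega)]
    exact adj_h h0 _ _ r (by omega) (by omega) rfl
  rcases Nat.lt_or_ge i m with h2 | h2
  · have him : i = m - 1 := by omega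
    rw [hs, if_neg (by omega), eLoopR, eLoopR, if_pos (by omega), if_neg (by omega), him]
    rcases zr_tv r with h | h
    · exact adj_v h0 _ (by omega) r (3-r) h
    · exact adj_v' h0 _ (by omega) r (3-r) h
  · have him : i = m := by omega
    rw [hs, him, if_pos rfl, eLoopR, eLoopR, if_neg (by omega), if_pos (by omega)]
    exact adj_t h0 hm (3-r) r (zr_33 r)

lemma loopR_inj {m : ℕ} (h0 : 0 < m) (r : ZMod 4) :
    ∀ i j, i < m + 1 → j < m + 1 → eLoopR m h0 r i = eLoopR m h0 r j → i = j := by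
  intro i j hi hj he
  rw [eLoopR, eLoopR] at he
  split_ifs at he with a b b
  · rw [pair_eq h0 (by omega) (by omega)] at he; omega
  · rw [pair_eq h0 (by omega) (by omega)] at he; exact absurd he.2 (zr_ne_tv r)
  · rw [pair_eq h0 (by omega) (by omega)] at he; exact absurd he.2.symm (zr_ne_tv r)
  · omega

lemma loopR_mem {m : ℕ} (h0 : 0 < m) (r : ZMod 4) :
    ∀ i, i < m + 1 → ∃ x r', eLoopR m h0 r i = (fc m h0 x, r') ∧ x < m ∧
      (r' = r ∨ (r' = 3 - r ∧ x = m - 1)) := by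
  intro i hi
  rw [eLoopR]
  split_ifs with a
  · exact ⟨i, r, rfl, by omega, Or.inl rfl⟩
  · exact ⟨m - 1, 3 - r, rfl, by omega, Or.inr ⟨rfl, rfl⟩⟩

lemma loopR_cov {m : ℕ} (h0 : 0 < m) (r : ZMod 4) (c : ℕ) (hc : c < m) :
    ∃ i, i < m + 1 ∧ eLoopR m h0 r i = (fc m h0 c, r) := by
  exact ⟨c, by omega, by rw [eLoopR, if_pos hc]⟩

lemma loopR_cov' {m : ℕ} (h0 : 0 < m) (r : ZMod 4) :
    ∃ i, i < m + 1 ∧ eLoopR m h0 r i = (fc m h0 (m-1), 3 - r) := by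
  exact ⟨m, by omega, by rw [eLoopR, if_neg (by omega)]⟩

/-! ### Left loop: row `r` on all columns plus the vertex `(0, 3-r)` -/

def eLoopL (m : ℕ) (h0 : 0 < m) (r : ZMod 4) (i : ℕ) : Fin m × ZMod 4 :=
  if i = 0 then (fc m h0 0, 3 - r) else (fc m h0 (i - 1), r)

lemma loopL_adj {m : ℕ} (h0 : 0 < m) (hm : 3 ≤ m) (r : ZMod 4) :
    ∀ i, i < m + 1 → (specialProd m).Adj (eLoopL m h0 r i) (eLoopL m h0 r (csucc (m+1) i)) := by
  intro i hi
  have hs : csucc (m+1) i = if i + 1 = m + 1 then 0 else i + 1 := rfl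
  rcases Nat.eq_or_lt_of_le (Nat.zero_le i) with h1 | h1
  · rw [hs, if_neg (by omega), eLoopL, eLoopL, if_pos (by omega), if_neg (by omega)]
    simp only [← h1]
    rcases zr_tv r with h | h
    · exact adj_v' h0 _ (by omega) (3-r) r h
    · exact adj_v h0 _ (by omega) (3-r) r h
  rcases Nat.lt_or_ge (i+1) (m+1) with h2 | h2
  · rw [hs, if_neg (by omega), eLoopL, eLoopL, if_neg (by omega), if_neg (by omega)]
    exact adj_h h0 _ _ r (by omega) (by omega) (by omega)
  · have him : i = m := by omega
    rw [hs, him, if_pos rfl, eLoopL, eLoopL, if_neg (by omega), if_pos rfl]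
    exact adj_t h0 hm r (3-r) rfl

lemma loopL_inj {m : ℕ} (h0 : 0 < m) (r : ZMod 4) :
    ∀ i j, i < m + 1 → j < m + 1 → eLoopL m h0 r i = eLoopL m h0 r j → i = j := by
  intro i j hi hj he
  rw [eLoopL, eLoopL] at he
  split_ifs at he with a b b
  · omega
  · rw [pair_eq h0 (by omega) (by omega)] at he; exact absurd he.2.symm (zr_ne_tv r)
  · rw [pair_eq h0 (by omega) (by omega)] at he; exact absurd he.2 (zr_ne_tv r)
  · rw [pair_eq h0 (by omega) (by omega)] at he; omega

lemma loopL_mem {m : ℕ} (h0 : 0 < m) (r : ZMod 4) :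
    ∀ i, i < m + 1 → ∃ x r', eLoopL m h0 r i = (fc m h0 x, r') ∧ x < m ∧
      (r' = r ∨ (r' = 3 - r ∧ x = 0)) := by
  intro i hi
  rw [eLoopL]
  split_ifs with a
  · exact ⟨0, 3 - r, rfl, by omega, Or.inr ⟨rfl, rfl⟩⟩
  · exact ⟨i - 1, r, rfl, by omega, Or.inl rfl⟩

lemma loopL_cov {m : ℕ} (h0 : 0 < m) (r : ZMod 4) (c : ℕ) (hc : c < m) :
    ∃ i, i < m + 1 ∧ eLoopL m h0 r i = (fc m h0 c, r) := by
  refine ⟨c + 1, by omega, ?_⟩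
  rw [eLoopL, if_neg (by omega)]
  simp

lemma loopL_cov' {m : ℕ} (h0 : 0 < m) (r : ZMod 4) :
    ∃ i, i < m + 1 ∧ eLoopL m h0 r i = (fc m h0 0, 3 - r) := by
  exact ⟨0, by omega, by rw [eLoopL, if_pos rfl]⟩

end Pieces2

section Pieces3

lemma zr_32 : ∀ p : ZMod 4, 3 - p = (2 - p) + 1 := by decide
lemma zr_2n3 : ∀ p : ZMod 4, 2 - p ≠ 3 - p := by decide
lemma zr_pn3 : ∀ p : ZMod 4, p ≠ 3 - p := by decide
lemma zr_2n1 : ∀ p : ZMod 4, 2 - p ≠ p + 1 := by decide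
lemma zr_23 : ∀ p : ZMod 4, 2 - p = 3 - (p + 1) := by decide

/-- Twisted mixed piece: rows `{p, p+1}` on columns `[s..m-1]` together with
rows `{3-p, 2-p}` on columns `[0..t]`, closed up through the two twist edges. -/
def eTwMix (m : ℕ) (h0 : 0 < m) (p : ZMod 4) (s t : ℕ) (i : ℕ) : Fin m × ZMod 4 :=
  if i < m - s then (fc m h0 (s + i), p)
  else if i < m - s + t + 1 then (fc m h0 (i - (m - s)), 3 - p)
  else if i < m - s + 2*t + 2 then (fc m h0 (t - (i - (m - s + t + 1))), 2 - p)
  else (fc m h0 (m - 1 - (i - (m - s + 2*t + 2))), p + 1)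

def twL (m s t : ℕ) : ℕ := 2 * (m - s) + 2 * (t + 1)

lemma twmix_L3 (m s t : ℕ) (hsm : s < m) : 3 ≤ twL m s t := by
  unfold twL; omega

lemma twmix_adj {m : ℕ} (h0 : 0 < m) (hm : 3 ≤ m) (p : ZMod 4) (s t : ℕ)
    (hsm : s < m) (hts : t < s) :
    ∀ i, i < twL m s t →
      (specialProd m).Adj (eTwMix m h0 p s t i) (eTwMix m h0 p s t (csucc (twL m s t) i)) := by
  intro i hi
  have hL : twL m s t = 2 * (m - s) + 2 * (t + 1) := rfl
  have hs : csucc (twL m s t) i = if i + 1 = twL m s t then 0 else i + 1 := rfl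
  rcases Nat.lt_or_ge (i+1) (m - s) with h1 | h1
  · rw [hs, if_neg (by omega), eTwMix, eTwMix, if_pos (by omega), if_pos (by omega)]
    exact adj_h h0 _ _ p (by omega) (by omega) (by omega)
  rcases Nat.lt_or_ge i (m - s) with h2 | h2
  · -- i = m - s - 1, twist to (0, 3-p)
    rw [hs, if_neg (by omega), eTwMix, eTwMix, if_pos (by omega), if_neg (by omega),
      if_pos (by omega)]
    have c1 : s + i = m - 1 := by omega
    have c2 : i + 1 - (m - s) = 0 := by omega
    rw [c1, c2]
    exact adj_t h0 hm p (3 - p) rfl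
  rcases Nat.lt_or_ge (i+1) (m - s + t + 1) with h3 | h3
  · rw [hs, if_neg (by omega), eTwMix, eTwMix, if_neg (by omega), if_pos (by omega),
      if_neg (by omega), if_pos (by omega)]
    exact adj_h h0 _ _ (3-p) (by omega) (by omega) (by omega)
  rcases Nat.lt_or_ge i (m - s + t + 1) with h4 | h4
  · -- i = m-s+t : vertical from (t, 3-p) to (t, 2-p)
    rw [hs, if_neg (by omega), eTwMix, eTwMix, if_neg (by omega), if_pos (by omega),
      if_neg (by omega), if_neg (by omega), if_pos (by omega)]
    have c1 : i - (m - s) = t := by omega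
    have c2 : t - (i + 1 - (m - s + t + 1)) = t := by omega
    rw [c1, c2]
    exact adj_v' h0 t (by omega) (3-p) (2-p) (zr_32 p)
  rcases Nat.lt_or_ge (i+1) (m - s + 2*t + 2) with h5 | h5
  · rw [hs, if_neg (by omega), eTwMix, eTwMix, if_neg (by omega), if_neg (by omega),
      if_pos (by omega), if_neg (by omega), if_neg (by omega), if_pos (by omega)]
    apply SimpleGraph.Adj.symm
    exact adj_h h0 _ _ (2-p) (by omega) (by omega) (by omega)
  rcases Nat.lt_or_ge i (m - s + 2*t + 2) with h6 | h6
  · -- i = m-s+2t+1 : twist from (0, 2-p) to (m-1, p+1)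
    rw [hs, if_neg (by omega), eTwMix, eTwMix, if_neg (by omega), if_neg (by omega),
      if_pos (by omega), if_neg (by omega), if_neg (by omega), if_neg (by omega)]
    have c1 : t - (i - (m - s + t + 1)) = 0 := by omega
    have c2 : m - 1 - (i + 1 - (m - s + 2*t + 2)) = m - 1 := by omega
    rw [c1, c2]
    exact adj_t' h0 hm (p+1) (2-p) (zr_23 p)
  rcases Nat.lt_or_ge (i+1) (twL m s t) with h7 | h7
  · rw [hs, if_neg (by omega), eTwMix, eTwMix, if_neg (by omega), if_neg (by omega),
      if_neg (by omega), if_neg (by omega), if_neg (by omega), if_neg (by omega)]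
    apply SimpleGraph.Adj.symm
    exact adj_h h0 _ _ (p+1) (by omega) (by omega) (by omega)
  · -- i = L - 1 : vertical from (s, p+1) to (s, p)
    rw [hs, if_pos (by omega), eTwMix, eTwMix, if_neg (by omega), if_neg (by omega),
      if_neg (by omega), if_pos (by omega)]
    have c1 : m - 1 - (i - (m - s + 2*t + 2)) = s := by omega
    have c2 : s + 0 = s := by omega
    rw [c1, c2]
    exact adj_v' h0 s (by omega) (p+1) p rfl

lemma twmix_inj {m : ℕ} (h0 : 0 < m) (p : ZMod 4) (s t : ℕ)
    (hsm : s < m) (hts : t < s) :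
    ∀ i j, i < twL m s t → j < twL m s t →
      eTwMix m h0 p s t i = eTwMix m h0 p s t j → i = j := by
  intro i j hi hj he
  have hL : twL m s t = 2 * (m - s) + 2 * (t + 1) := rfl
  rw [eTwMix, eTwMix] at he
  split_ifs at he <;> rw [pair_eq h0 (by omega) (by omega)] at he <;>
    obtain ⟨hc', hr'⟩ := he <;>
    first
      | omega
      | exact absurd hr' (zr_pn3 p)
      | exact absurd hr'.symm (zr_pn3 p)
      | exact absurd hr' (zr_2n3 p)
      | exact absurd hr'.symm (zr_2n3 p)
      | exact absurd hr' (zr_2n1 p)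
      | exact absurd hr'.symm (zr_2n1 p)
      | exact absurd hr' (zr_ne_succ p)
      | exact absurd hr'.symm (zr_ne_succ p)

lemma twmix_mem {m : ℕ} (h0 : 0 < m) (p : ZMod 4) (s t : ℕ)
    (hsm : s < m) (hts : t < s) :
    ∀ i, i < twL m s t → ∃ x r, eTwMix m h0 p s t i = (fc m h0 x, r) ∧ x < m ∧
      ((r = p ∧ s ≤ x) ∨ (r = 3 - p ∧ x ≤ t) ∨ (r = 2 - p ∧ x ≤ t) ∨ (r = p + 1 ∧ s ≤ x)) := by
  intro i hi
  have hL : twL m s t = 2 * (m - s) + 2 * (t + 1) := rfl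
  rw [eTwMix]
  split_ifs with a b c
  · exact ⟨s + i, p, rfl, by omega, Or.inl ⟨rfl, by omega⟩⟩
  · exact ⟨i - (m - s), 3 - p, rfl, by omega, Or.inr (Or.inl ⟨rfl, by omega⟩)⟩
  · exact ⟨t - (i - (m - s + t + 1)), 2 - p, rfl, by omega, Or.inr (Or.inr (Or.inl ⟨rfl, by omega⟩))⟩
  · exact ⟨m - 1 - (i - (m - s + 2*t + 2)), p + 1, rfl, by omega, Or.inr (Or.inr (Or.inr ⟨rfl, by omega⟩))⟩

lemma twmix_cov_a {m : ℕ} (h0 : 0 < m) (p : ZMod 4) (s t : ℕ)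
    (hsm : s < m) (hts : t < s) (c : ℕ) (r : ZMod 4) (hc : s ≤ c) (hcm : c < m)
    (hr : r = p ∨ r = p + 1) :
    ∃ i, i < twL m s t ∧ eTwMix m h0 p s t i = (fc m h0 c, r) := by
  have hL : twL m s t = 2 * (m - s) + 2 * (t + 1) := rfl
  rcases hr with rfl | rfl
  · refine ⟨c - s, by omega, ?_⟩
    rw [eTwMix, if_pos (by omega), pair_eq h0 (by omega) (by omega)]
    exact ⟨by omega, rfl⟩
  · refine ⟨(m - s + 2*t + 2) + (m - 1 - c), by omega, ?_⟩
    rw [eTwMix, if_neg (by omega), if_neg (by omega), if_neg (by omega),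
      pair_eq h0 (by omega) (by omega)]
    exact ⟨by omega, rfl⟩

lemma twmix_cov_b {m : ℕ} (h0 : 0 < m) (p : ZMod 4) (s t : ℕ)
    (hsm : s < m) (hts : t < s) (c : ℕ) (r : ZMod 4) (hc : c ≤ t)
    (hr : r = 3 - p ∨ r = 2 - p) :
    ∃ i, i < twL m s t ∧ eTwMix m h0 p s t i = (fc m h0 c, r) := by
  have hL : twL m s t = 2 * (m - s) + 2 * (t + 1) := rfl
  rcases hr with rfl | rfl
  · refine ⟨(m - s) + c, by omega, ?_⟩
    rw [eTwMix, if_neg (by omega), if_pos (by omega), pair_eq h0 (by omega) (by omega)]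
    exact ⟨by omega, rfl⟩
  · refine ⟨(m - s + t + 1) + (t - c), by omega, ?_⟩
    rw [eTwMix, if_neg (by omega), if_neg (by omega), if_pos (by omega),
      pair_eq h0 (by omega) (by omega)]
    exact ⟨by omega, rfl⟩

end Pieces3

section Cores

lemma zr_sep : ∀ p r1 r2 : ZMod 4, (r1 = p ∨ r1 = p + 1) → (r2 = p + 2 ∨ r2 = p + 2 + 1) →
    r1 ≠ r2 := by decide

lemma zr_sep' : ∀ p r1 r2 : ZMod 4, (r1 = 3 - p ∨ r1 = 2 - p) →
    (r2 = 3 - (p + 2) ∨ r2 = 2 - (p + 2)) → r1 ≠ r2 := by decide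

lemma zr_all4 : ∀ r p : ZMod 4, (r = p ∨ r = p + 1) ∨ (r = p + 2 ∨ r = p + 2 + 1) := by decide

lemma zr_all4' : ∀ r p : ZMod 4, (r = 3 - p ∨ r = 2 - p) ∨
    (r = 3 - (p + 2) ∨ r = 2 - (p + 2)) := by decide

lemma zr_findp : ∀ r1 r2 : ZMod 4, r1 ≠ r2 →
    ∃ p, (r1 = p ∨ r1 = p + 1) ∧ (r2 = p + 2 ∨ r2 = p + 2 + 1) := by decide

lemma zr_findsame : ∀ r : ZMod 4, ∃ p, (r = p ∨ r = p + 1) ∧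
    (r = 3 - (p + 2) ∨ r = 2 - (p + 2)) := by decide

lemma vexp {m : ℕ} (h0 : 0 < m) (v : Fin m × ZMod 4) : v = (fc m h0 v.1.val, v.2) := by
  rw [fc_self h0 v.1]

/-- k = 2, marks in complementary row pairs: two full rectangles. -/
lemma core_k2_rows {m : ℕ} (hm : 3 ≤ m) (p : ZMod 4) (a b : Fin m × ZMod 4)
    (hra : a.2 = p ∨ a.2 = p + 1) (hrb : b.2 = p + 2 ∨ b.2 = p + 2 + 1) :
    ∃ H, IsTwoFactor (specialProd m) H ∧ SeparatesSet H {a, b} := by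
  have h0 : 0 < m := by omega
  have hst : (0:ℕ) < m - 1 := by omega
  have htm : m - 1 < m := by omega
  apply assemble2 (specialProd m) {a, b} (2 * (m - 1 - 0 + 1)) (2 * (m - 1 - 0 + 1))
    (eRect m h0 p 0 (m-1)) (eRect m h0 (p+2) 0 (m-1)) a b
    (by omega) (by omega)
    (rect_adj h0 p 0 (m-1) hst htm) (rect_adj h0 (p+2) 0 (m-1) hst htm)
    (rect_inj h0 p 0 (m-1) hst htm) (rect_inj h0 (p+2) 0 (m-1) hst htm)
  · intro i j hi hj he
    obtain ⟨x, r1, hex, _, _, hd1⟩ := rect_mem h0 p 0 (m-1) hst htm i hi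
    obtain ⟨y, r2, hey, _, _, hd2⟩ := rect_mem h0 (p+2) 0 (m-1) hst htm j hj
    rw [hex, hey, pair_eq h0 (by omega) (by omega)] at he
    exact zr_sep p r1 r2 hd1 hd2 he.2
  · intro v
    rcases zr_all4 v.2 p with h | h
    · left
      obtain ⟨i, hi, hei⟩ := rect_cov h0 p 0 (m-1) hst htm v.1.val v.2 (by omega)
        (by omega) h
      exact ⟨i, hi, by rw [hei, ← vexp h0 v]⟩
    · right
      obtain ⟨i, hi, hei⟩ := rect_cov h0 (p+2) 0 (m-1) hst htm v.1.val v.2 (by omega)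
        (by omega) h
      exact ⟨i, hi, by rw [hei, ← vexp h0 v]⟩
  · obtain ⟨i, hi, hei⟩ := rect_cov h0 p 0 (m-1) hst htm a.1.val a.2 (by omega)
      (by omega) hra
    exact ⟨i, hi, by rw [hei, ← vexp h0 a]⟩
  · obtain ⟨i, hi, hei⟩ := rect_cov h0 (p+2) 0 (m-1) hst htm b.1.val b.2 (by omega)
      (by omega) hrb
    exact ⟨i, hi, by rw [hei, ← vexp h0 b]⟩
  · rfl

/-- k = 2, marks in the same row: two twisted mixed pieces split at the larger column. -/
lemma core_k2_same {m : ℕ} (hm : 3 ≤ m) (p : ZMod 4) (u v : Fin m) (r : ZMod 4)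
    (huv : u.val < v.val)
    (hrb : r = p ∨ r = p + 1) (hra : r = 3 - (p + 2) ∨ r = 2 - (p + 2)) :
    ∃ H, IsTwoFactor (specialProd m) H ∧ SeparatesSet H {(v, r), (u, r)} := by
  have h0 : 0 < m := by omega
  have hsm : v.val < m := v.isLt
  have hts : v.val - 1 < v.val := by omega
  apply assemble2 (specialProd m) {(v, r), (u, r)} (twL m v.val (v.val - 1))
    (twL m v.val (v.val - 1))
    (eTwMix m h0 p v.val (v.val - 1)) (eTwMix m h0 (p+2) v.val (v.val - 1)) (v, r) (u, r)
    (twmix_L3 m _ _ hsm) (twmix_L3 m _ _ hsm)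
    (twmix_adj h0 hm p _ _ hsm hts) (twmix_adj h0 hm (p+2) _ _ hsm hts)
    (twmix_inj h0 p _ _ hsm hts) (twmix_inj h0 (p+2) _ _ hsm hts)
  · intro i j hi hj he
    obtain ⟨x, r1, hex, hxm, hd1⟩ := twmix_mem h0 p _ _ hsm hts i hi
    obtain ⟨y, r2, hey, hym, hd2⟩ := twmix_mem h0 (p+2) _ _ hsm hts j hj
    rw [hex, hey, pair_eq h0 hxm hym] at he
    obtain ⟨hc, hr⟩ := he
    rcases hd1 with ⟨hr1, hx⟩ | ⟨hr1, hx⟩ | ⟨hr1, hx⟩ | ⟨hr1, hx⟩ <;>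
      rcases hd2 with ⟨hr2, hy⟩ | ⟨hr2, hy⟩ | ⟨hr2, hy⟩ | ⟨hr2, hy⟩ <;>
      first
        | omega
        | exact zr_sep p r1 r2 (Or.inl hr1) (Or.inl hr2) hr
        | exact zr_sep p r1 r2 (Or.inl hr1) (Or.inr hr2) hr
        | exact zr_sep p r1 r2 (Or.inr hr1) (Or.inl hr2) hr
        | exact zr_sep p r1 r2 (Or.inr hr1) (Or.inr hr2) hr
        | exact zr_sep' p r1 r2 (Or.inl hr1) (Or.inl hr2) hr
        | exact zr_sep' p r1 r2 (Or.inl hr1) (Or.inr hr2) hr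
        | exact zr_sep' p r1 r2 (Or.inr hr1) (Or.inl hr2) hr
        | exact zr_sep' p r1 r2 (Or.inr hr1) (Or.inr hr2) hr
  · intro w
    rcases Nat.lt_or_ge w.1.val v.val with hw | hw
    · rcases zr_all4' w.2 p with h | h
      · left
        obtain ⟨i, hi, hei⟩ := twmix_cov_b h0 p _ _ hsm hts w.1.val w.2 (by omega) h
        exact ⟨i, hi, by rw [hei, ← vexp h0 w]⟩
      · right
        obtain ⟨i, hi, hei⟩ := twmix_cov_b h0 (p+2) _ _ hsm hts w.1.val w.2 (by omega) h
        exact ⟨i, hi, by rw [hei, ← vexp h0 w]⟩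
    · rcases zr_all4 w.2 p with h | h
      · left
        obtain ⟨i, hi, hei⟩ := twmix_cov_a h0 p _ _ hsm hts w.1.val w.2 hw w.1.isLt h
        exact ⟨i, hi, by rw [hei, ← vexp h0 w]⟩
      · right
        obtain ⟨i, hi, hei⟩ := twmix_cov_a h0 (p+2) _ _ hsm hts w.1.val w.2 hw w.1.isLt h
        exact ⟨i, hi, by rw [hei, ← vexp h0 w]⟩
  · obtain ⟨i, hi, hei⟩ := twmix_cov_a h0 p _ _ hsm hts v.val r le_rfl v.isLt hrb
    exact ⟨i, hi, by rw [hei, ← vexp h0 (v, r)]⟩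
  · obtain ⟨i, hi, hei⟩ := twmix_cov_b h0 (p+2) _ _ hsm hts u.val r (by omega) hra
    exact ⟨i, hi, by rw [hei, ← vexp h0 (u, r)]⟩
  · rfl

/-- k = 2 : the graph is 2-spanning cyclable. -/
lemma part2 {m : ℕ} (hm : 3 ≤ m) : SpanningCyclable (specialProd m) 2 := by
  intro A hA
  obtain ⟨a, b, hab, rfl⟩ := Finset.card_eq_two.mp hA
  obtain ⟨ca, ra⟩ := a
  obtain ⟨cb, rb⟩ := b
  by_cases hr : ra = rb
  · subst hr
    have hc : ca ≠ cb := fun h => hab (by rw [h])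
    obtain ⟨p, hp1, hp2⟩ := zr_findsame ra
    rcases Nat.lt_or_ge ca.val cb.val with h | h
    · rw [Finset.pair_comm]
      exact core_k2_same hm p ca cb ra h hp1 hp2
    · have h' : cb.val < ca.val := by
        rcases Nat.lt_or_ge cb.val ca.val with h' | h'
        · exact h'
        · exact absurd (Fin.ext (by omega)) hc
      exact core_k2_same hm p cb ca ra h' hp1 hp2
  · obtain ⟨p, hp1, hp2⟩ := zr_findp ra rb hr
    exact core_k2_rows hm p (ca, ra) (cb, rb) hp1 hp2

end Cores

section Cores3

lemma zr_d2 : ∀ p r : ZMod 4, (r = p ∨ r = p + 1) → (r = p + 2 ∨ r = p + 2 + 1) → False := by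
  decide

/-- k = 3, lone mark at column 0, plus two marks in complementary row pairs. -/
lemma core_lone_left {m : ℕ} (hm : 3 ≤ m) (p : ZMod 4) (x y z : Fin m × ZMod 4)
    (hx : x.1.val = 0) (hy1 : y.1.val ≠ 0) (hz1 : z.1.val ≠ 0)
    (hry : y.2 = p ∨ y.2 = p + 1) (hrz : z.2 = p + 2 ∨ z.2 = p + 2 + 1) :
    ∃ H, IsTwoFactor (specialProd m) H ∧ SeparatesSet H {x, y, z} := by
  have h0 : 0 < m := by omega
  have hst : (1:ℕ) < m - 1 := by omega
  have htm : m - 1 < m := by omega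
  apply assemble3 (specialProd m) {x, y, z} 4 (2 * (m - 1 - 1 + 1)) (2 * (m - 1 - 1 + 1))
    (eCol m h0 0) (eRect m h0 p 1 (m-1)) (eRect m h0 (p+2) 1 (m-1)) x y z
    (by omega) (by omega) (by omega)
    (col_adj h0 0 h0) (rect_adj h0 p 1 (m-1) hst htm) (rect_adj h0 (p+2) 1 (m-1) hst htm)
    (col_inj h0 0 h0) (rect_inj h0 p 1 (m-1) hst htm) (rect_inj h0 (p+2) 1 (m-1) hst htm)
  · intro i j hi hj he
    obtain ⟨c1, r1, he1, hc1⟩ := col_mem h0 0 h0 i hi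
    obtain ⟨c2, r2, he2, _, hcc, _⟩ := rect_mem h0 p 1 (m-1) hst htm j hj
    rw [he1, he2, pair_eq h0 (by omega) (by omega)] at he
    omega
  · intro i j hi hj he
    obtain ⟨c1, r1, he1, hc1⟩ := col_mem h0 0 h0 i hi
    obtain ⟨c2, r2, he2, _, hcc, _⟩ := rect_mem h0 (p+2) 1 (m-1) hst htm j hj
    rw [he1, he2, pair_eq h0 (by omega) (by omega)] at he
    omega
  · intro i j hi hj he
    obtain ⟨c1, r1, he1, _, _, hd1⟩ := rect_mem h0 p 1 (m-1) hst htm i hi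
    obtain ⟨c2, r2, he2, _, _, hd2⟩ := rect_mem h0 (p+2) 1 (m-1) hst htm j hj
    rw [he1, he2, pair_eq h0 (by omega) (by omega)] at he
    exact zr_sep p r1 r2 hd1 hd2 he.2
  · intro v
    by_cases hv : v.1.val = 0
    · left
      obtain ⟨i, hi, hei⟩ := col_cov h0 0 h0 v.2
      exact ⟨i, hi, by rw [hei, ← hv, ← vexp h0 v]⟩
    · rcases zr_all4 v.2 p with h | h
      · right; left
        obtain ⟨i, hi, hei⟩ := rect_cov h0 p 1 (m-1) hst htm v.1.val v.2 (by omega)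
          (by omega) h
        exact ⟨i, hi, by rw [hei, ← vexp h0 v]⟩
      · right; right
        obtain ⟨i, hi, hei⟩ := rect_cov h0 (p+2) 1 (m-1) hst htm v.1.val v.2 (by omega)
          (by omega) h
        exact ⟨i, hi, by rw [hei, ← vexp h0 v]⟩
  · obtain ⟨i, hi, hei⟩ := col_cov h0 0 h0 x.2
    exact ⟨i, hi, by rw [hei, ← hx, ← vexp h0 x]⟩
  · obtain ⟨i, hi, hei⟩ := rect_cov h0 p 1 (m-1) hst htm y.1.val y.2 (by omega)
      (by omega) hry
    exact ⟨i, hi, by rw [hei, ← vexp h0 y]⟩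
  · obtain ⟨i, hi, hei⟩ := rect_cov h0 (p+2) 1 (m-1) hst htm z.1.val z.2 (by omega)
      (by omega) hrz
    exact ⟨i, hi, by rw [hei, ← vexp h0 z]⟩
  · rfl

/-- k = 3, lone mark at column m-1. -/
lemma core_lone_right {m : ℕ} (hm : 3 ≤ m) (p : ZMod 4) (x y z : Fin m × ZMod 4)
    (hx : x.1.val = m - 1) (hy1 : y.1.val ≠ m - 1) (hz1 : z.1.val ≠ m - 1)
    (hry : y.2 = p ∨ y.2 = p + 1) (hrz : z.2 = p + 2 ∨ z.2 = p + 2 + 1) :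
    ∃ H, IsTwoFactor (specialProd m) H ∧ SeparatesSet H {x, y, z} := by
  have h0 : 0 < m := by omega
  have hst : (0:ℕ) < m - 2 := by omega
  have htm : m - 2 < m := by omega
  have hy2 : y.1.val ≤ m - 2 := by have := y.1.isLt; omega
  have hz2 : z.1.val ≤ m - 2 := by have := z.1.isLt; omega
  apply assemble3 (specialProd m) {x, y, z} 4 (2 * (m - 2 - 0 + 1)) (2 * (m - 2 - 0 + 1))
    (eCol m h0 (m-1)) (eRect m h0 p 0 (m-2)) (eRect m h0 (p+2) 0 (m-2)) x y z
    (by omega) (by omega) (by omega)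
    (col_adj h0 (m-1) (by omega)) (rect_adj h0 p 0 (m-2) hst htm)
    (rect_adj h0 (p+2) 0 (m-2) hst htm)
    (col_inj h0 (m-1) (by omega)) (rect_inj h0 p 0 (m-2) hst htm)
    (rect_inj h0 (p+2) 0 (m-2) hst htm)
  · intro i j hi hj he
    obtain ⟨c1, r1, he1, hc1⟩ := col_mem h0 (m-1) (by omega) i hi
    obtain ⟨c2, r2, he2, _, hcc, _⟩ := rect_mem h0 p 0 (m-2) hst htm j hj
    rw [he1, he2, pair_eq h0 (by omega) (by omega)] at he
    omega
  · intro i j hi hj he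
    obtain ⟨c1, r1, he1, hc1⟩ := col_mem h0 (m-1) (by omega) i hi
    obtain ⟨c2, r2, he2, _, hcc, _⟩ := rect_mem h0 (p+2) 0 (m-2) hst htm j hj
    rw [he1, he2, pair_eq h0 (by omega) (by omega)] at he
    omega
  · intro i j hi hj he
    obtain ⟨c1, r1, he1, _, _, hd1⟩ := rect_mem h0 p 0 (m-2) hst htm i hi
    obtain ⟨c2, r2, he2, _, _, hd2⟩ := rect_mem h0 (p+2) 0 (m-2) hst htm j hj
    rw [he1, he2, pair_eq h0 (by omega) (by omega)] at he
    exact zr_sep p r1 r2 hd1 hd2 he.2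
  · intro v
    by_cases hv : v.1.val = m - 1
    · left
      obtain ⟨i, hi, hei⟩ := col_cov h0 (m-1) (by omega) v.2
      exact ⟨i, hi, by rw [hei, ← hv, ← vexp h0 v]⟩
    · have hvm : v.1.val ≤ m - 2 := by have := v.1.isLt; omega
      rcases zr_all4 v.2 p with h | h
      · right; left
        obtain ⟨i, hi, hei⟩ := rect_cov h0 p 0 (m-2) hst htm v.1.val v.2 (by omega)
          (by omega) h
        exact ⟨i, hi, by rw [hei, ← vexp h0 v]⟩
      · right; right
        obtain ⟨i, hi, hei⟩ := rect_cov h0 (p+2) 0 (m-2) hst htm v.1.val v.2 (by omega)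
          (by omega) h
        exact ⟨i, hi, by rw [hei, ← vexp h0 v]⟩
  · obtain ⟨i, hi, hei⟩ := col_cov h0 (m-1) (by omega) x.2
    exact ⟨i, hi, by rw [hei, ← hx, ← vexp h0 x]⟩
  · obtain ⟨i, hi, hei⟩ := rect_cov h0 p 0 (m-2) hst htm y.1.val y.2 (by omega)
      (by omega) hry
    exact ⟨i, hi, by rw [hei, ← vexp h0 y]⟩
  · obtain ⟨i, hi, hei⟩ := rect_cov h0 (p+2) 0 (m-2) hst htm z.1.val z.2 (by omega)
      (by omega) hrz
    exact ⟨i, hi, by rw [hei, ← vexp h0 z]⟩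
  · rfl

/-- k = 3, lone mark at a middle column `j`, two twisted mixed pieces around it. -/
lemma core_lone_mid {m : ℕ} (hm : 3 ≤ m) (p : ZMod 4) (j : ℕ) (hj1 : 1 ≤ j) (hj2 : j ≤ m - 2)
    (x y z : Fin m × ZMod 4) (hx : x.1.val = j)
    (hy : ((y.2 = p ∨ y.2 = p + 1) ∧ j < y.1.val) ∨
      ((y.2 = 3 - p ∨ y.2 = 2 - p) ∧ y.1.val < j))
    (hz : ((z.2 = p + 2 ∨ z.2 = p + 2 + 1) ∧ j < z.1.val) ∨
      ((z.2 = 3 - (p + 2) ∨ z.2 = 2 - (p + 2)) ∧ z.1.val < j)) :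
    ∃ H, IsTwoFactor (specialProd m) H ∧ SeparatesSet H {x, y, z} := by
  have h0 : 0 < m := by omega
  have hsm : j + 1 < m := by omega
  have hts : j - 1 < j + 1 := by omega
  apply assemble3 (specialProd m) {x, y, z} 4 (twL m (j+1) (j-1)) (twL m (j+1) (j-1))
    (eCol m h0 j) (eTwMix m h0 p (j+1) (j-1)) (eTwMix m h0 (p+2) (j+1) (j-1)) x y z
    (by omega) (twmix_L3 m _ _ hsm) (twmix_L3 m _ _ hsm)
    (col_adj h0 j (by omega)) (twmix_adj h0 hm p _ _ hsm hts)
    (twmix_adj h0 hm (p+2) _ _ hsm hts)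
    (col_inj h0 j (by omega)) (twmix_inj h0 p _ _ hsm hts) (twmix_inj h0 (p+2) _ _ hsm hts)
  · intro i j' hi hj' he
    obtain ⟨c1, r1, he1, hc1⟩ := col_mem h0 j (by omega) i hi
    obtain ⟨c2, r2, he2, hc2m, hd2⟩ := twmix_mem h0 p _ _ hsm hts j' hj'
    rw [he1, he2, pair_eq h0 (by omega) (by omega)] at he
    rcases hd2 with ⟨_, hcc⟩ | ⟨_, hcc⟩ | ⟨_, hcc⟩ | ⟨_, hcc⟩ <;> omega
  · intro i j' hi hj' he
    obtain ⟨c1, r1, he1, hc1⟩ := col_mem h0 j (by omega) i hi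
    obtain ⟨c2, r2, he2, hc2m, hd2⟩ := twmix_mem h0 (p+2) _ _ hsm hts j' hj'
    rw [he1, he2, pair_eq h0 (by omega) (by omega)] at he
    rcases hd2 with ⟨_, hcc⟩ | ⟨_, hcc⟩ | ⟨_, hcc⟩ | ⟨_, hcc⟩ <;> omega
  · intro i j' hi hj' he
    obtain ⟨c1, r1, he1, hc1m, hd1⟩ := twmix_mem h0 p _ _ hsm hts i hi
    obtain ⟨c2, r2, he2, hc2m, hd2⟩ := twmix_mem h0 (p+2) _ _ hsm hts j' hj'
    rw [he1, he2, pair_eq h0 hc1m hc2m] at he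
    obtain ⟨hc, hr⟩ := he
    rcases hd1 with ⟨hr1, hx'⟩ | ⟨hr1, hx'⟩ | ⟨hr1, hx'⟩ | ⟨hr1, hx'⟩ <;>
      rcases hd2 with ⟨hr2, hy'⟩ | ⟨hr2, hy'⟩ | ⟨hr2, hy'⟩ | ⟨hr2, hy'⟩ <;>
      first
        | omega
        | exact zr_sep p r1 r2 (Or.inl hr1) (Or.inl hr2) hr
        | exact zr_sep p r1 r2 (Or.inl hr1) (Or.inr hr2) hr
        | exact zr_sep p r1 r2 (Or.inr hr1) (Or.inl hr2) hr
        | exact zr_sep p r1 r2 (Or.inr hr1) (Or.inr hr2) hr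
        | exact zr_sep' p r1 r2 (Or.inl hr1) (Or.inl hr2) hr
        | exact zr_sep' p r1 r2 (Or.inl hr1) (Or.inr hr2) hr
        | exact zr_sep' p r1 r2 (Or.inr hr1) (Or.inl hr2) hr
        | exact zr_sep' p r1 r2 (Or.inr hr1) (Or.inr hr2) hr
  · intro v
    rcases Nat.lt_trichotomy v.1.val j with hv | hv | hv
    · rcases zr_all4' v.2 p with h | h
      · right; left
        obtain ⟨i, hi, hei⟩ := twmix_cov_b h0 p _ _ hsm hts v.1.val v.2 (by omega) h
        exact ⟨i, hi, by rw [hei, ← vexp h0 v]⟩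
      · right; right
        obtain ⟨i, hi, hei⟩ := twmix_cov_b h0 (p+2) _ _ hsm hts v.1.val v.2 (by omega) h
        exact ⟨i, hi, by rw [hei, ← vexp h0 v]⟩
    · left
      obtain ⟨i, hi, hei⟩ := col_cov h0 j (by omega) v.2
      exact ⟨i, hi, by rw [hei, ← hv, ← vexp h0 v]⟩
    · rcases zr_all4 v.2 p with h | h
      · right; left
        obtain ⟨i, hi, hei⟩ := twmix_cov_a h0 p _ _ hsm hts v.1.val v.2 (by omega)
          v.1.isLt h
        exact ⟨i, hi, by rw [hei, ← vexp h0 v]⟩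
      · right; right
        obtain ⟨i, hi, hei⟩ := twmix_cov_a h0 (p+2) _ _ hsm hts v.1.val v.2 (by omega)
          v.1.isLt h
        exact ⟨i, hi, by rw [hei, ← vexp h0 v]⟩
  · obtain ⟨i, hi, hei⟩ := col_cov h0 j (by omega) x.2
    exact ⟨i, hi, by rw [hei, ← hx, ← vexp h0 x]⟩
  · rcases hy with ⟨h, hc⟩ | ⟨h, hc⟩
    · obtain ⟨i, hi, hei⟩ := twmix_cov_a h0 p _ _ hsm hts y.1.val y.2 (by omega) y.1.isLt h
      exact ⟨i, hi, by rw [hei, ← vexp h0 y]⟩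
    · obtain ⟨i, hi, hei⟩ := twmix_cov_b h0 p _ _ hsm hts y.1.val y.2 (by omega) h
      exact ⟨i, hi, by rw [hei, ← vexp h0 y]⟩
  · rcases hz with ⟨h, hc⟩ | ⟨h, hc⟩
    · obtain ⟨i, hi, hei⟩ := twmix_cov_a h0 (p+2) _ _ hsm hts z.1.val z.2 (by omega)
        z.1.isLt h
      exact ⟨i, hi, by rw [hei, ← vexp h0 z]⟩
    · obtain ⟨i, hi, hei⟩ := twmix_cov_b h0 (p+2) _ _ hsm hts z.1.val z.2 (by omega) h
      exact ⟨i, hi, by rw [hei, ← vexp h0 z]⟩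
  · rfl

end Cores3

section Cores4

/-- k = 3, all three marks in column `i < m-1`, rows `p, p+1` and one of `p+2, p+3`,
with `p ∈ {0, 2}`: two right loops plus a rectangle. -/
lemma core_same_col_R {m : ℕ} (hm : 3 ≤ m) (p : ZMod 4) (hp : p = 0 ∨ p = 2) (i : Fin m)
    (hi : i.val < m - 1) (rz : ZMod 4) (hz : rz = p + 2 ∨ rz = p + 2 + 1) :
    ∃ H, IsTwoFactor (specialProd m) H ∧ SeparatesSet H {(i, p), (i, p+1), (i, rz)} := by
  have h0 : 0 < m := by omega
  have hst : (0:ℕ) < m - 2 := by omega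
  have htm : m - 2 < m := by omega
  have fB : p ≠ 3 - (p + 1) := by rcases hp with rfl | rfl <;> decide
  have fC : 3 - p ≠ p + 1 := by rcases hp with rfl | rfl <;> decide
  have fD : ∀ q : ZMod 4, 3 - q ≠ 3 - (q + 1) := by decide
  have fE : ∀ q r : ZMod 4, q = r + 2 ∨ q = r + 2 + 1 → r ≠ q := by decide
  have fF : (3:ZMod 4) - (p + 1) = p + 2 := by rcases hp with rfl | rfl <;> decide
  have fG : (3:ZMod 4) - p = p + 2 + 1 := by rcases hp with rfl | rfl <;> decide
  apply assemble3 (specialProd m) {(i, p), (i, p+1), (i, rz)} (m+1) (m+1)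
    (2 * (m - 2 - 0 + 1))
    (eLoopR m h0 p) (eLoopR m h0 (p+1)) (eRect m h0 (p+2) 0 (m-2)) (i, p) (i, p+1) (i, rz)
    (by omega) (by omega) (by omega)
    (loopR_adj h0 hm p) (loopR_adj h0 hm (p+1)) (rect_adj h0 (p+2) 0 (m-2) hst htm)
    (loopR_inj h0 p) (loopR_inj h0 (p+1)) (rect_inj h0 (p+2) 0 (m-2) hst htm)
  · intro a b ha hb he
    obtain ⟨c1, r1, he1, hc1, hd1⟩ := loopR_mem h0 p a ha
    obtain ⟨c2, r2, he2, hc2, hd2⟩ := loopR_mem h0 (p+1) b hb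
    rw [he1, he2, pair_eq h0 hc1 hc2] at he
    obtain ⟨hcx, hrx⟩ := he
    rcases hd1 with h1 | ⟨h1, _⟩ <;> rcases hd2 with h2 | ⟨h2, _⟩ <;> rw [h1, h2] at hrx
    · exact zr_ne_succ p hrx
    · exact fB hrx
    · exact fC hrx
    · exact fD p hrx
  · intro a b ha hb he
    obtain ⟨c1, r1, he1, hc1, hd1⟩ := loopR_mem h0 p a ha
    obtain ⟨c2, r2, he2, _, _, hd2⟩ := rect_mem h0 (p+2) 0 (m-2) hst htm b hb
    rw [he1, he2, pair_eq h0 hc1 (by omega)] at he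
    obtain ⟨hcx, hrx⟩ := he
    rcases hd1 with h1 | ⟨h1, hcc1⟩
    · rw [h1] at hrx
      exact zr_d2 p r2 (Or.inl hrx.symm) hd2
    · omega
  · intro a b ha hb he
    obtain ⟨c1, r1, he1, hc1, hd1⟩ := loopR_mem h0 (p+1) a ha
    obtain ⟨c2, r2, he2, _, hcc, hd2⟩ := rect_mem h0 (p+2) 0 (m-2) hst htm b hb
    rw [he1, he2, pair_eq h0 hc1 (by omega)] at he
    obtain ⟨hcx, hrx⟩ := he
    rcases hd1 with h1 | ⟨h1, hcc1⟩
    · rw [h1] at hrx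
      exact zr_d2 p r2 (Or.inr hrx.symm) hd2
    · omega
  · intro v
    rcases zr_all4 v.2 p with h | h
    · rcases h with h | h
      · left
        obtain ⟨a, ha, hea⟩ := loopR_cov h0 p v.1.val v.1.isLt
        exact ⟨a, ha, by rw [hea, ← h, ← vexp h0 v]⟩
      · right; left
        obtain ⟨a, ha, hea⟩ := loopR_cov h0 (p+1) v.1.val v.1.isLt
        exact ⟨a, ha, by rw [hea, ← h, ← vexp h0 v]⟩
    · by_cases hv : v.1.val ≤ m - 2
      · right; right
        obtain ⟨a, ha, hea⟩ := rect_cov h0 (p+2) 0 (m-2) hst htm v.1.val v.2 (by omega)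
          (by omega) h
        exact ⟨a, ha, by rw [hea, ← vexp h0 v]⟩
      · have hv1 : v.1.val = m - 1 := by have := v.1.isLt; omega
        rcases h with h | h
        · right; left
          obtain ⟨a, ha, hea⟩ := loopR_cov' h0 (p+1)
          refine ⟨a, ha, ?_⟩
          rw [hea, fF, ← h, ← hv1, ← vexp h0 v]
        · left
          obtain ⟨a, ha, hea⟩ := loopR_cov' h0 p
          refine ⟨a, ha, ?_⟩
          rw [hea, fG, ← h, ← hv1, ← vexp h0 v]
  · obtain ⟨a, ha, hea⟩ := loopR_cov h0 p i.val i.isLt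
    exact ⟨a, ha, by rw [hea, fc_self h0 i]⟩
  · obtain ⟨a, ha, hea⟩ := loopR_cov h0 (p+1) i.val i.isLt
    exact ⟨a, ha, by rw [hea, fc_self h0 i]⟩
  · obtain ⟨a, ha, hea⟩ := rect_cov h0 (p+2) 0 (m-2) hst htm i.val rz (by omega)
      (by omega) hz
    exact ⟨a, ha, by rw [hea, fc_self h0 i]⟩
  · rfl

/-- k = 3, all three marks in column `m-1`: two left loops plus a rectangle. -/
lemma core_same_col_L {m : ℕ} (hm : 3 ≤ m) (p : ZMod 4) (hp : p = 0 ∨ p = 2) (i : Fin m)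
    (hi : i.val = m - 1) (rz : ZMod 4) (hz : rz = p + 2 ∨ rz = p + 2 + 1) :
    ∃ H, IsTwoFactor (specialProd m) H ∧ SeparatesSet H {(i, p), (i, p+1), (i, rz)} := by
  have h0 : 0 < m := by omega
  have hst : (1:ℕ) < m - 1 := by omega
  have htm : m - 1 < m := by omega
  have fB : p ≠ 3 - (p + 1) := by rcases hp with rfl | rfl <;> decide
  have fC : 3 - p ≠ p + 1 := by rcases hp with rfl | rfl <;> decide
  have fD : ∀ q : ZMod 4, 3 - q ≠ 3 - (q + 1) := by decide
  have fF : (3:ZMod 4) - (p + 1) = p + 2 := by rcases hp with rfl | rfl <;> decide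
  have fG : (3:ZMod 4) - p = p + 2 + 1 := by rcases hp with rfl | rfl <;> decide
  apply assemble3 (specialProd m) {(i, p), (i, p+1), (i, rz)} (m+1) (m+1)
    (2 * (m - 1 - 1 + 1))
    (eLoopL m h0 p) (eLoopL m h0 (p+1)) (eRect m h0 (p+2) 1 (m-1)) (i, p) (i, p+1) (i, rz)
    (by omega) (by omega) (by omega)
    (loopL_adj h0 hm p) (loopL_adj h0 hm (p+1)) (rect_adj h0 (p+2) 1 (m-1) hst htm)
    (loopL_inj h0 p) (loopL_inj h0 (p+1)) (rect_inj h0 (p+2) 1 (m-1) hst htm)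
  · intro a b ha hb he
    obtain ⟨c1, r1, he1, hc1, hd1⟩ := loopL_mem h0 p a ha
    obtain ⟨c2, r2, he2, hc2, hd2⟩ := loopL_mem h0 (p+1) b hb
    rw [he1, he2, pair_eq h0 hc1 hc2] at he
    obtain ⟨hcx, hrx⟩ := he
    rcases hd1 with h1 | ⟨h1, _⟩ <;> rcases hd2 with h2 | ⟨h2, _⟩ <;> rw [h1, h2] at hrx
    · exact zr_ne_succ p hrx
    · exact fB hrx
    · exact fC hrx
    · exact fD p hrx
  · intro a b ha hb he
    obtain ⟨c1, r1, he1, hc1, hd1⟩ := loopL_mem h0 p a ha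
    obtain ⟨c2, r2, he2, _, hcc, hd2⟩ := rect_mem h0 (p+2) 1 (m-1) hst htm b hb
    rw [he1, he2, pair_eq h0 hc1 (by omega)] at he
    obtain ⟨hcx, hrx⟩ := he
    rcases hd1 with h1 | ⟨h1, hcc1⟩
    · rw [h1] at hrx
      exact zr_d2 p r2 (Or.inl hrx.symm) hd2
    · omega
  · intro a b ha hb he
    obtain ⟨c1, r1, he1, hc1, hd1⟩ := loopL_mem h0 (p+1) a ha
    obtain ⟨c2, r2, he2, _, hcc, hd2⟩ := rect_mem h0 (p+2) 1 (m-1) hst htm b hb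
    rw [he1, he2, pair_eq h0 hc1 (by omega)] at he
    obtain ⟨hcx, hrx⟩ := he
    rcases hd1 with h1 | ⟨h1, hcc1⟩
    · rw [h1] at hrx
      exact zr_d2 p r2 (Or.inr hrx.symm) hd2
    · omega
  · intro v
    rcases zr_all4 v.2 p with h | h
    · rcases h with h | h
      · left
        obtain ⟨a, ha, hea⟩ := loopL_cov h0 p v.1.val v.1.isLt
        exact ⟨a, ha, by rw [hea, ← h, ← vexp h0 v]⟩
      · right; left
        obtain ⟨a, ha, hea⟩ := loopL_cov h0 (p+1) v.1.val v.1.isLt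
        exact ⟨a, ha, by rw [hea, ← h, ← vexp h0 v]⟩
    · by_cases hv : 1 ≤ v.1.val
      · right; right
        obtain ⟨a, ha, hea⟩ := rect_cov h0 (p+2) 1 (m-1) hst htm v.1.val v.2 (by omega)
          (by have := v.1.isLt; omega) h
        exact ⟨a, ha, by rw [hea, ← vexp h0 v]⟩
      · have hv1 : v.1.val = 0 := by omega
        rcases h with h | h
        · right; left
          obtain ⟨a, ha, hea⟩ := loopL_cov' h0 (p+1)
          refine ⟨a, ha, ?_⟩
          rw [hea, fF, ← h, ← hv1, ← vexp h0 v]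
        · left
          obtain ⟨a, ha, hea⟩ := loopL_cov' h0 p
          refine ⟨a, ha, ?_⟩
          rw [hea, fG, ← h, ← hv1, ← vexp h0 v]
  · obtain ⟨a, ha, hea⟩ := loopL_cov h0 p i.val i.isLt
    exact ⟨a, ha, by rw [hea, fc_self h0 i]⟩
  · obtain ⟨a, ha, hea⟩ := loopL_cov h0 (p+1) i.val i.isLt
    exact ⟨a, ha, by rw [hea, fc_self h0 i]⟩
  · obtain ⟨a, ha, hea⟩ := rect_cov h0 (p+2) 1 (m-1) hst htm i.val rz (by omega)
      (by omega) hz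
    exact ⟨a, ha, by rw [hea, fc_self h0 i]⟩
  · rfl

end Cores4

section Endgame

lemma cast_sep {V : Type*} {X : SimpleGraph V} {A B : Finset V} (h : A = B)
    (res : ∃ H, IsTwoFactor X H ∧ SeparatesSet H B) :
    ∃ H, IsTwoFactor X H ∧ SeparatesSet H A := h ▸ res

lemma zr_findp' : ∀ r1 r2 : ZMod 4, r1 ≠ r2 →
    ∃ p, (r1 = 3 - p ∨ r1 = 2 - p) ∧ (r2 = 3 - (p + 2) ∨ r2 = 2 - (p + 2)) := by decide

lemma zr_findmid : ∀ r : ZMod 4,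
    ∃ p, (r = 3 - p ∨ r = 2 - p) ∧ (r = p + 2 ∨ r = p + 2 + 1) := by decide

/-- All three marks in one column, rows in canonical order. -/
lemma same_col_one {m : ℕ} (hm : 3 ≤ m) (i : Fin m) (r1 r2 r3 : ZMod 4)
    (h : (r1 = 0 ∧ r2 = 1 ∧ (r3 = 2 ∨ r3 = 3)) ∨ (r1 = 2 ∧ r2 = 3 ∧ (r3 = 0 ∨ r3 = 1))) :
    ∃ H, IsTwoFactor (specialProd m) H ∧ SeparatesSet H {(i, r1), (i, r2), (i, r3)} := by
  by_cases hi : i.val < m - 1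
  · rcases h with ⟨rfl, rfl, h3⟩ | ⟨rfl, rfl, h3⟩
    · have e : (1 : ZMod 4) = 0 + 1 := by decide
      rw [e]
      exact core_same_col_R hm 0 (Or.inl rfl) i hi r3
        (by rcases h3 with rfl | rfl
            · exact Or.inl (by decide)
            · exact Or.inr (by decide))
    · have e : (3 : ZMod 4) = 2 + 1 := by decide
      rw [e]
      exact core_same_col_R hm 2 (Or.inr rfl) i hi r3
        (by rcases h3 with rfl | rfl
            · exact Or.inl (by decide)
            · exact Or.inr (by decide))
  · have hi' : i.val = m - 1 := by have := i.isLt; omega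
    rcases h with ⟨rfl, rfl, h3⟩ | ⟨rfl, rfl, h3⟩
    · have e : (1 : ZMod 4) = 0 + 1 := by decide
      rw [e]
      exact core_same_col_L hm 0 (Or.inl rfl) i hi' r3
        (by rcases h3 with rfl | rfl
            · exact Or.inl (by decide)
            · exact Or.inr (by decide))
    · have e : (3 : ZMod 4) = 2 + 1 := by decide
      rw [e]
      exact core_same_col_L hm 2 (Or.inr rfl) i hi' r3
        (by rcases h3 with rfl | rfl
            · exact Or.inl (by decide)
            · exact Or.inr (by decide))

set_option maxHeartbeats 3200000 in
/-- All three marks in one column, arbitrary distinct rows. -/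
lemma same_col_case {m : ℕ} (hm : 3 ≤ m) (i : Fin m) (r1 r2 r3 : ZMod 4)
    (h12 : r1 ≠ r2) (h13 : r1 ≠ r3) (h23 : r2 ≠ r3) :
    ∃ H, IsTwoFactor (specialProd m) H ∧ SeparatesSet H {(i, r1), (i, r2), (i, r3)} := by
  rcases zr_cases r1 with rfl | rfl | rfl | rfl <;>
    rcases zr_cases r2 with rfl | rfl | rfl | rfl <;>
    rcases zr_cases r3 with rfl | rfl | rfl | rfl <;>
    first
      | exact absurd rfl h12
      | exact absurd rfl h13
      | exact absurd rfl h23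
      | (refine cast_sep ?_ (same_col_one hm i 0 1 2 (Or.inl ⟨rfl, rfl, Or.inl rfl⟩));
         ext w; simp only [Finset.mem_insert, Finset.mem_singleton];
         first | tauto | done)
      | (refine cast_sep ?_ (same_col_one hm i 0 1 3 (Or.inl ⟨rfl, rfl, Or.inr rfl⟩));
         ext w; simp only [Finset.mem_insert, Finset.mem_singleton];
         first | tauto | done)
      | (refine cast_sep ?_ (same_col_one hm i 2 3 0 (Or.inr ⟨rfl, rfl, Or.inl rfl⟩));
         ext w; simp only [Finset.mem_insert, Finset.mem_singleton];
         first | tauto | done)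
      | (refine cast_sep ?_ (same_col_one hm i 2 3 1 (Or.inr ⟨rfl, rfl, Or.inr rfl⟩));
         ext w; simp only [Finset.mem_insert, Finset.mem_singleton];
         first | tauto | done)

/-- Lone mark `x`, two marks `y z` in a common column different from `x`'s. -/
lemma pair_case {m : ℕ} (hm : 3 ≤ m) (x y z : Fin m × ZMod 4)
    (hxy : y.1 ≠ x.1) (hyz : y.1 = z.1) (hr : y.2 ≠ z.2) :
    ∃ H, IsTwoFactor (specialProd m) H ∧ SeparatesSet H {x, y, z} := by
  have hxz : z.1 ≠ x.1 := hyz ▸ hxy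
  have hvy : y.1.val ≠ x.1.val := fun h => hxy (Fin.ext h)
  have hvz : z.1.val ≠ x.1.val := fun h => hxz (Fin.ext h)
  by_cases h1 : x.1.val = 0
  · obtain ⟨p, hp1, hp2⟩ := zr_findp y.2 z.2 hr
    exact core_lone_left hm p x y z h1 (by omega) (by omega) hp1 hp2
  · by_cases h2 : x.1.val = m - 1
    · obtain ⟨p, hp1, hp2⟩ := zr_findp y.2 z.2 hr
      exact core_lone_right hm p x y z h2 (by omega) (by omega) hp1 hp2
    · have hj1 : 1 ≤ x.1.val := by omega
      have hj2 : x.1.val ≤ m - 2 := by have := x.1.isLt; omega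
      rcases Nat.lt_or_ge y.1.val x.1.val with hside | hside
      · obtain ⟨p, hp1, hp2⟩ := zr_findp' y.2 z.2 hr
        exact core_lone_mid hm p x.1.val hj1 hj2 x y z rfl
          (Or.inr ⟨hp1, hside⟩)
          (Or.inr ⟨hp2, by rw [← hyz]; exact hside⟩)
      · obtain ⟨p, hp1, hp2⟩ := zr_findp y.2 z.2 hr
        exact core_lone_mid hm p x.1.val hj1 hj2 x y z rfl
          (Or.inl ⟨hp1, by omega⟩)
          (Or.inl ⟨hp2, by rw [← hyz]; omega⟩)

/-- Three marks in pairwise distinct columns, sorted. -/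
lemma distinct_case {m : ℕ} (hm : 3 ≤ m) (u1 u2 u3 : Fin m × ZMod 4)
    (h12 : u1.1.val < u2.1.val) (h23 : u2.1.val < u3.1.val) :
    ∃ H, IsTwoFactor (specialProd m) H ∧ SeparatesSet H {u1, u2, u3} := by
  have hu3m : u3.1.val < m := u3.1.isLt
  by_cases hA : u2.2 = u3.2
  · by_cases hB : u1.2 = u2.2
    · -- all rows equal; lone mark is the middle one
      obtain ⟨p, hp1, hp2⟩ := zr_findmid u1.2
      refine cast_sep (B := {u2, u1, u3})
        (by ext w; simp only [Finset.mem_insert, Finset.mem_singleton]; tauto) ?_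
      exact core_lone_mid hm p u2.1.val (by omega) (by omega) u2 u1 u3 rfl
        (Or.inr ⟨hp1, h12⟩)
        (Or.inl ⟨by rw [← hA, ← hB]; exact hp2, h23⟩)
    · -- lone mark is u3
      refine cast_sep (B := {u3, u1, u2})
        (by ext w; simp only [Finset.mem_insert, Finset.mem_singleton]; tauto) ?_
      by_cases h3 : u3.1.val = m - 1
      · obtain ⟨p, hp1, hp2⟩ := zr_findp u1.2 u2.2 hB
        exact core_lone_right hm p u3 u1 u2 h3 (by omega) (by omega) hp1 hp2
      · obtain ⟨p, hp1, hp2⟩ := zr_findp' u1.2 u2.2 hB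
        exact core_lone_mid hm p u3.1.val (by omega) (by omega) u3 u1 u2 rfl
          (Or.inr ⟨hp1, by omega⟩) (Or.inr ⟨hp2, h23⟩)
  · -- lone mark is u1
    by_cases h1 : u1.1.val = 0
    · obtain ⟨p, hp1, hp2⟩ := zr_findp u2.2 u3.2 hA
      exact core_lone_left hm p u1 u2 u3 h1 (by omega) (by omega) hp1 hp2
    · obtain ⟨p, hp1, hp2⟩ := zr_findp u2.2 u3.2 hA
      exact core_lone_mid hm p u1.1.val (by omega) (by omega) u1 u2 u3 rfl
        (Or.inl ⟨hp1, h12⟩) (Or.inl ⟨hp2, by omega⟩)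

lemma part3 {m : ℕ} (hm : 3 ≤ m) : SpanningCyclable (specialProd m) 3 := by
  intro A hA
  obtain ⟨a, b, c, hab, hac, hbc, rfl⟩ := Finset.card_eq_three.mp hA
  by_cases e1 : a.1 = b.1
  · by_cases e2 : a.1 = c.1
    · -- all in one column
      have hr1 : a.2 ≠ b.2 := fun h => hab (Prod.ext e1 h)
      have hr2 : a.2 ≠ c.2 := fun h => hac (Prod.ext e2 h)
      have hr3 : b.2 ≠ c.2 := fun h => hbc (Prod.ext (e1 ▸ e2) h)
      refine cast_sep (B := {(a.1, a.2), (a.1, b.2), (a.1, c.2)}) ?_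
        (same_col_case hm a.1 a.2 b.2 c.2 hr1 hr2 hr3)
      have ha : (a.1, a.2) = a := rfl
      have hb : (a.1, b.2) = b := by rw [e1]
      have hc : (a.1, c.2) = c := by rw [e2]
      rw [ha, hb, hc]
    · -- a,b share a column, c lone
      refine cast_sep (B := {c, a, b})
        (by ext w; simp only [Finset.mem_insert, Finset.mem_singleton]; tauto) ?_
      exact pair_case hm c a b (fun h => e2 h) e1 (fun h => hab (Prod.ext e1 h))
  · by_cases e2 : a.1 = c.1
    · -- a,c share a column, b lone
      refine cast_sep (B := {b, a, c})
        (by ext w; simp only [Finset.mem_insert, Finset.mem_singleton]; tauto) ?_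
      exact pair_case hm b a c (fun h => e1 h) e2 (fun h => hac (Prod.ext e2 h))
    · by_cases e3 : b.1 = c.1
      · -- b,c share a column, a lone
        refine cast_sep (B := {a, b, c}) rfl ?_
        exact pair_case hm a b c (fun h => e1 h.symm) e3 (fun h => hbc (Prod.ext e3 h))
      · -- all columns distinct
        have v1 : a.1.val ≠ b.1.val := fun h => e1 (Fin.ext h)
        have v2 : a.1.val ≠ c.1.val := fun h => e2 (Fin.ext h)
        have v3 : b.1.val ≠ c.1.val := fun h => e3 (Fin.ext h)
        rcases Nat.lt_or_ge a.1.val b.1.val with o1 | o1 <;>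
          rcases Nat.lt_or_ge b.1.val c.1.val with o2 | o2 <;>
          rcases Nat.lt_or_ge a.1.val c.1.val with o3 | o3
        · exact distinct_case hm a b c o1 o2
        · omega
        · exact cast_sep (B := {a, c, b})
            (by ext w; simp only [Finset.mem_insert, Finset.mem_singleton]; tauto)
            (distinct_case hm a c b o3 (by omega))
        · exact cast_sep (B := {c, a, b})
            (by ext w; simp only [Finset.mem_insert, Finset.mem_singleton]; tauto)
            (distinct_case hm c a b (by omega) o1)
        · exact cast_sep (B := {b, a, c})
            (by ext w; simp only [Finset.mem_insert, Finset.mem_singleton]; tauto)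
            (distinct_case hm b a c (by omega) o3)
        · exact cast_sep (B := {b, c, a})
            (by ext w; simp only [Finset.mem_insert, Finset.mem_singleton]; tauto)
            (distinct_case hm b c a o2 (by omega))
        · omega
        · exact cast_sep (B := {c, b, a})
            (by ext w; simp only [Finset.mem_insert, Finset.mem_singleton]; tauto)
            (distinct_case hm c b a (by omega) (by omega))

end Endgame

/-- For every `m ≥ 3`, the graph `C_m □_τ C_4` with `τ = (0 3)(1 2)`
is both 2-spanning cyclable and 3-spanning cyclable. -/
theorem statement_14 (m : ℕ) (hm : 3 ≤ m) :
    SpanningCyclable (specialProd m) 2 ∧ SpanningCyclable (specialProd m) 3 :=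
  ⟨part2 hm, part3 hm⟩
end

section
/- Let s ≥ 2 and n be integers with gcd(n, s) = 1 and n ≥ 2s. Then the circulant graph circ(n; ±1, ±s) is 2-spanning cyclable if and only if n ≥ 6. -/
open SimpleGraph

set_option maxHeartbeats 1000000
set_option linter.unusedTactic false
set_option linter.unreachableTactic false
set_option linter.unusedSectionVars false

namespace St15

variable {V : Type*}

/-- the 2-factor determined by a successor map -/
def factor (σ : V → V) : SimpleGraph V := SimpleGraph.fromRel (fun u v => σ u = v)

lemma factor_adj {σ : V → V} {u v : V} :
    (factor σ).Adj u v ↔ u ≠ v ∧ (σ u = v ∨ σ v = u) := Iff.rfl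

lemma factor_nbhd {σ τ : V → V} (hστ : ∀ z, τ (σ z) = z) (hτσ : ∀ z, σ (τ z) = z)
    (hfix : ∀ z, σ z ≠ z) (v : V) : (factor σ).neighborSet v = {σ v, τ v} := by
  ext z
  simp only [mem_neighborSet, factor_adj, Set.mem_insert_iff, Set.mem_singleton_iff]
  constructor
  · rintro ⟨hne, h | h⟩
    · exact Or.inl h.symm
    · right; rw [← h, hστ]
  · rintro (rfl | rfl)
    · exact ⟨(hfix v).symm, Or.inl rfl⟩
    · refine ⟨fun h => hfix (τ v) ?_, Or.inr (hτσ v)⟩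
      rw [hτσ]; exact h

lemma factor_deg {σ τ : V → V} (hστ : ∀ z, τ (σ z) = z) (hτσ : ∀ z, σ (τ z) = z)
    (hfix : ∀ z, σ z ≠ z) (h2 : ∀ z, σ (σ z) ≠ z) (v : V) :
    ((factor σ).neighborSet v).ncard = 2 := by
  rw [factor_nbhd hστ hτσ hfix]
  refine Set.ncard_pair (fun h => h2 v ?_)
  rw [h, hτσ]

lemma factor_le {σ : V → V} {X : SimpleGraph V} (hadj : ∀ z, X.Adj z (σ z)) :
    factor σ ≤ X := by
  intro u v huv
  rw [factor_adj] at huv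
  rcases huv with ⟨hne, rfl | h⟩
  · exact hadj u
  · exact (X.adj_symm (h ▸ hadj v))

lemma factor_mk_succ {σ : V → V} (hfix : ∀ z, σ z ≠ z) (z : V) :
    (factor σ).connectedComponentMk (σ z) = (factor σ).connectedComponentMk z :=
  (ConnectedComponent.sound (Adj.reachable (factor_adj.2 ⟨Ne.symm (hfix z), Or.inl rfl⟩))).symm

lemma factor_invariant {σ : V → V} {P : V → Prop} (hP : ∀ z, P z ↔ P (σ z))
    {u v : V} (h : (factor σ).connectedComponentMk u = (factor σ).connectedComponentMk v) :
    P u ↔ P v := by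
  rw [ConnectedComponent.eq] at h
  obtain ⟨w⟩ := h
  induction w with
  | nil => rfl
  | cons hadj _ ih =>
    rw [← ih]
    rw [factor_adj] at hadj
    rcases hadj with ⟨hne, rfl | h⟩
    · exact hP _
    · rw [← h]; exact (hP _).symm

/-- main assembly: if we have a successor map with the right properties and
a separating invariant, we get a separating two-factor -/
lemma assemble [DecidableEq V] {X : SimpleGraph V} {A : Finset V} {a b : V} (hA : A = {a, b}) (hab : a ≠ b)
    (σ τ : V → V) (hστ : ∀ z, τ (σ z) = z) (hτσ : ∀ z, σ (τ z) = z)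
    (hfix : ∀ z, σ z ≠ z) (h2 : ∀ z, σ (σ z) ≠ z) (hadj : ∀ z, X.Adj z (σ z))
    (P : V → Prop) (hP : ∀ z, P z ↔ P (σ z)) (hPa : ¬ P a) (hPb : P b)
    (hcov : ∀ z : V, (factor σ).connectedComponentMk z = (factor σ).connectedComponentMk a ∨
      (factor σ).connectedComponentMk z = (factor σ).connectedComponentMk b) :
    ∃ H : SimpleGraph V, IsTwoFactor X H ∧ SeparatesSet H A := by
  classical
  refine ⟨factor σ, ⟨factor_le hadj, factor_deg hστ hτσ hfix h2⟩, ?_⟩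
  have hmkab : (factor σ).connectedComponentMk a ≠ (factor σ).connectedComponentMk b := by
    intro h
    exact hPa ((factor_invariant hP h).2 hPb)
  intro C
  obtain ⟨z, hz⟩ := C.exists_rep
  have hz' : (factor σ).connectedComponentMk z = C := hz
  subst hz'
  rcases hcov z with h | h
  · refine ⟨a, ⟨by simp [hA], h.symm⟩, ?_⟩
    rintro y ⟨hy, hy2⟩
    rw [hA] at hy
    simp only [Finset.mem_insert, Finset.mem_singleton] at hy
    rcases hy with rfl | rfl
    · rfl
    · exact absurd (hy2.trans h).symm hmkab
  · refine ⟨b, ⟨by simp [hA], h.symm⟩, ?_⟩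
    rintro y ⟨hy, hy2⟩
    rw [hA] at hy
    simp only [Finset.mem_insert, Finset.mem_singleton] at hy
    rcases hy with rfl | rfl
    · exact absurd (hy2.trans h) hmkab
    · rfl



set_option maxHeartbeats 1000000
set_option linter.unusedTactic false
set_option linter.unreachableTactic false
set_option linter.unusedSectionVars false



variable {n : ℕ} [NeZero n]

/-- successor map on `ZMod n` from an index function -/
def toFun (c : ZMod n) (f : ℕ → ℕ) : ZMod n → ZMod n :=
  fun z => c + (f ((z - c).val) : ZMod n)

lemma toFun_apply (c : ZMod n) (f : ℕ → ℕ) {k : ℕ} (hk : k < n) :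
    toFun c f (c + (k : ZMod n)) = c + (f k : ZMod n) := by
  simp [toFun, ZMod.val_cast_of_lt hk]

lemma sub_val (c : ZMod n) {k : ℕ} (hk : k < n) : ((c + (k : ZMod n)) - c).val = k := by
  simp [ZMod.val_cast_of_lt hk]

lemma eq_c_add (c z : ZMod n) : z = c + ((z - c).val : ZMod n) := by
  rw [ZMod.natCast_rightInverse]; ring

lemma toFun_inv {c : ZMod n} {f g : ℕ → ℕ} (hf : ∀ k < n, f k < n)
    (hfg : ∀ k < n, g (f k) = k) (z : ZMod n) : toFun c g (toFun c f z) = z := by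
  have hk : (z - c).val < n := ZMod.val_lt _
  conv_lhs => rw [eq_c_add c z, toFun_apply c f hk, toFun_apply c g (hf _ hk), hfg _ hk]
  exact (eq_c_add c z).symm

lemma cast_inj_of_lt {i j : ℕ} (hi : i < n) (hj : j < n) (h : (i : ZMod n) = j) : i = j := by
  have := congrArg ZMod.val h
  rwa [ZMod.val_cast_of_lt hi, ZMod.val_cast_of_lt hj] at this

lemma toFun_ne {c : ZMod n} {f : ℕ → ℕ} (hf : ∀ k < n, f k < n)
    (hne : ∀ k < n, f k ≠ k) (z : ZMod n) : toFun c f z ≠ z := by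
  set k := (z - c).val with hkdef
  have hk : k < n := ZMod.val_lt _
  have hz : c + (k : ZMod n) = z := (eq_c_add c z).symm
  rw [← hz, toFun_apply c f hk]
  intro h
  exact hne _ hk (cast_inj_of_lt (hf _ hk) hk (add_left_cancel h))

lemma toFun_ne2 {c : ZMod n} {f : ℕ → ℕ} (hf : ∀ k < n, f k < n)
    (hne : ∀ k < n, f (f k) ≠ k) (z : ZMod n) : toFun c f (toFun c f z) ≠ z := by
  set k := (z - c).val with hkdef
  have hk : k < n := ZMod.val_lt _
  have hz : c + (k : ZMod n) = z := (eq_c_add c z).symm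
  rw [← hz, toFun_apply c f hk, toFun_apply c f (hf _ hk)]
  intro h
  exact hne _ hk (cast_inj_of_lt (hf _ (hf _ hk)) hk (add_left_cancel h))

lemma toFun_invariant {c : ZMod n} {f : ℕ → ℕ} (hf : ∀ k < n, f k < n)
    {Q : ℕ → Prop} (hQ : ∀ k < n, (Q k ↔ Q (f k))) (z : ZMod n) :
    Q ((z - c).val) ↔ Q ((toFun c f z - c).val) := by
  set k := (z - c).val with hkdef
  have hk : k < n := ZMod.val_lt _
  have hz : c + (k : ZMod n) = z := (eq_c_add c z).symm
  rw [← hz, toFun_apply c f hk, sub_val c (hf _ hk)]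
  exact hQ _ hk

/-- existence of a good translate, given that the shape has no nontrivial period -/
lemma exists_shift (P : ZMod n → Prop) [DecidablePred P] (a b : ZMod n) (hab : a ≠ b)
    (hper : ∀ δ : ZMod n, δ ≠ 0 → (∀ z, P z ↔ P (z + δ)) → False) :
    ∃ c, P (b - c) ∧ ¬ P (a - c) := by
  by_contra hcon
  push_neg at hcon
  set δ := a - b with hδ
  have hδ0 : δ ≠ 0 := sub_ne_zero.2 hab
  have h1 : ∀ z, P z → P (z + δ) := by
    intro z hz
    have := hcon (b - z)
    rw [show b - (b - z) = z by ring] at this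
    rw [show a - (b - z) = z + δ by rw [hδ]; ring] at this
    exact this hz
  -- upgrade to iff by finiteness
  classical
  set S : Finset (ZMod n) := Finset.univ.filter P with hS
  have himg : S.image (· + δ) = S := by
    apply Finset.eq_of_subset_of_card_le
    · intro x hx
      simp only [Finset.mem_image] at hx
      obtain ⟨y, hy, rfl⟩ := hx
      simp only [hS, Finset.mem_filter, Finset.mem_univ, true_and] at hy ⊢
      exact h1 y hy
    · rw [Finset.card_image_of_injective _ (add_left_injective δ)]
  have h2 : ∀ z, P z ↔ P (z + δ) := by
    intro z
    constructor
    · exact h1 z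
    · intro hz
      have : z + δ ∈ S := by simp [hS, hz]
      rw [← himg] at this
      simp only [Finset.mem_image] at this
      obtain ⟨y, hy, hyz⟩ := this
      have : y = z := add_right_cancel hyz
      subst this
      simpa [hS] using hy
  exact hper δ hδ0 h2






def fX (n s k : ℕ) : ℕ :=
  if k = n - 2*s then n - s
  else if k = n - s then 0
  else if k = n - s - 1 then n - 1
  else if k = n - s + 1 then n - 2*s + 1
  else if k < n - s - 1 then k + 1
  else k - 1

def gX (n s k : ℕ) : ℕ :=
  if k = n - s then n - 2*s
  else if k = 0 then n - s
  else if k = n - 1 then n - s - 1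
  else if k = n - 2*s + 1 then n - s + 1
  else if k ≤ n - s - 1 then k - 1
  else k + 1

lemma fX_lt {n s : ℕ} (hs : 3 ≤ s) (hn : 2*s+1 ≤ n) : ∀ k < n, fX n s k < n := by
  intro k hk; unfold fX; split_ifs <;> omega

lemma gX_lt {n s : ℕ} (hs : 3 ≤ s) (hn : 2*s+1 ≤ n) : ∀ k < n, gX n s k < n := by
  intro k hk; unfold gX; split_ifs <;> omega

lemma gX_fX {n s : ℕ} (hs : 3 ≤ s) (hn : 2*s+1 ≤ n) : ∀ k < n, gX n s (fX n s k) = k := by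
  intro k hk; unfold fX; split_ifs <;> (unfold gX; split_ifs <;> first | omega | exact absurd rfl (by omega) | exact (by assumption : False).elim)

lemma fX_gX {n s : ℕ} (hs : 3 ≤ s) (hn : 2*s+1 ≤ n) : ∀ k < n, fX n s (gX n s k) = k := by
  intro k hk; unfold gX; split_ifs <;> (unfold fX; split_ifs <;> first | omega | exact absurd rfl (by omega) | exact (by assumption : False).elim)

lemma fX_ne {n s : ℕ} (hs : 3 ≤ s) (hn : 2*s+1 ≤ n) : ∀ k < n, fX n s k ≠ k := by
  intro k hk; unfold fX; split_ifs <;> omega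

lemma fX_ne_gX {n s : ℕ} (hs : 3 ≤ s) (hn : 2*s+1 ≤ n) : ∀ k < n, fX n s k ≠ gX n s k := by
  intro k hk; unfold fX gX; split_ifs <;> omega

lemma fX_ne2 {n s : ℕ} (hs : 3 ≤ s) (hn : 2*s+1 ≤ n) : ∀ k < n, fX n s (fX n s k) ≠ k := by
  intro k hk hcon
  have h1 : fX n s k < n := fX_lt hs hn k hk
  have h2 : gX n s (fX n s (fX n s k)) = fX n s k := gX_fX hs hn _ h1
  rw [hcon] at h2
  exact fX_ne_gX hs hn k hk h2.symm

lemma fX_inv {n s : ℕ} (hs : 3 ≤ s) (hn : 2*s+1 ≤ n) : ∀ k < n, ((k < n - 2*s + 1 ∨ k = n - s) ↔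
    (fX n s k < n - 2*s + 1 ∨ fX n s k = n - s)) := by
  intro k hk; unfold fX; split_ifs <;> omega



lemma circ_adj {n : ℕ} (S : Set (ZMod n)) (u v : ZMod n) :
    (circulantGraph S).Adj u v ↔ u ≠ v ∧ (u - v ∈ S ∨ v - u ∈ S) := by
  rw [circulantGraph]; rfl

section ConstrX

variable {n s : ℕ}

lemma fX_adj [NeZero n] (hs : 3 ≤ s) (hn : 2*s+1 ≤ n) : ∀ k < n,
    ((fX n s k : ℕ) : ZMod n) - (k : ℕ) ∈ ({1, -1, (s : ZMod n), -(s : ZMod n)} : Set (ZMod n)) := by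
  intro k hk
  have hns : ((n - s : ℕ) : ZMod n) = -(s : ZMod n) := by
    rw [Nat.cast_sub (by omega : s ≤ n), ZMod.natCast_self, zero_sub]
  unfold fX
  split_ifs with h1 h2 h3 h4 h5
  · -- k = n - 2s, value n - s : diff = s
    subst h1
    have e : ((n - s : ℕ) : ZMod n) - ((n - 2*s : ℕ) : ZMod n) = (s : ZMod n) := by
      rw [← Nat.cast_sub (by omega : n - 2*s ≤ n - s)]
      congr 1; omega
    rw [e]; simp
  · -- k = n - s, value 0 : diff = s
    subst h2
    have e : ((0 : ℕ) : ZMod n) - ((n - s : ℕ) : ZMod n) = (s : ZMod n) := by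
      rw [hns]; push_cast; ring
    rw [e]; simp
  · -- k = n - s - 1, value n - 1 : diff = s
    subst h3
    have e : ((n - 1 : ℕ) : ZMod n) - ((n - s - 1 : ℕ) : ZMod n) = (s : ZMod n) := by
      rw [← Nat.cast_sub (by omega : n - s - 1 ≤ n - 1)]
      congr 1; omega
    rw [e]; simp
  · -- k = n - s + 1, value n - 2s + 1 : diff = -s
    subst h4
    have e : ((n - s + 1 : ℕ) : ZMod n) - ((n - 2*s + 1 : ℕ) : ZMod n) = (s : ZMod n) := by
      rw [← Nat.cast_sub (by omega : n - 2*s + 1 ≤ n - s + 1)]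
      congr 1; omega
    have e2 : ((n - 2*s + 1 : ℕ) : ZMod n) - ((n - s + 1 : ℕ) : ZMod n) = -(s : ZMod n) := by
      rw [← e]; ring
    rw [e2]; simp
  · -- value k + 1 : diff = 1
    have e : ((k + 1 : ℕ) : ZMod n) - (k : ℕ) = (1 : ZMod n) := by push_cast; ring
    rw [e]; simp
  · -- value k - 1 : diff = -1
    have hk1 : 1 ≤ k := by omega
    have e : ((k - 1 : ℕ) : ZMod n) - (k : ℕ) = (-1 : ZMod n) := by
      rw [Nat.cast_sub hk1]; push_cast; ring
    rw [e]; simp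

variable [NeZero n]

/-- one step of the cycle, on the component level -/
lemma stepX (hs : 3 ≤ s) (hn : 2*s+1 ≤ n) (c : ZMod n) {k : ℕ} (hk : k < n) :
    (factor (toFun c (fX n s))).connectedComponentMk (c + ((fX n s k : ℕ) : ZMod n)) =
      (factor (toFun c (fX n s))).connectedComponentMk (c + (k : ZMod n)) := by
  have h := factor_mk_succ (σ := toFun c (fX n s))
    (toFun_ne (fX_lt hs hn) (fX_ne hs hn)) (c + ((k : ℕ) : ZMod n))
  rwa [toFun_apply c _ hk] at h

lemma U1X (hs : 3 ≤ s) (hn : 2*s+1 ≤ n) (c : ZMod n) : ∀ i, i < n - 2*s + 1 →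
    (factor (toFun c (fX n s))).connectedComponentMk (c + ((i : ℕ) : ZMod n)) =
      (factor (toFun c (fX n s))).connectedComponentMk c := by
  intro i
  induction i with
  | zero => intro _; norm_num
  | succ i ih =>
    intro h
    have hfi : fX n s i = i + 1 := by unfold fX; split_ifs <;> omega
    have hstep := stepX hs hn c (show i < n by omega)
    rw [hfi] at hstep
    rw [hstep]
    exact ih (by omega)

lemma U2X (hs : 3 ≤ s) (hn : 2*s+1 ≤ n) (c : ZMod n) : (factor (toFun c (fX n s))).connectedComponentMk (c + ((n - s : ℕ) : ZMod n)) =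
    (factor (toFun c (fX n s))).connectedComponentMk c := by
  have hfi : fX n s (n - 2*s) = n - s := by unfold fX; split_ifs <;> omega
  have hstep := stepX hs hn c (show n - 2*s < n by omega)
  rw [hfi] at hstep
  rw [hstep]
  exact U1X hs hn c _ (by omega)

lemma T1X (hs : 3 ≤ s) (hn : 2*s+1 ≤ n) (c : ZMod n) : ∀ j, j ≤ s - 2 →
    (factor (toFun c (fX n s))).connectedComponentMk (c + ((n - 2*s + 1 + j : ℕ) : ZMod n)) =
      (factor (toFun c (fX n s))).connectedComponentMk (c + ((n - 2*s + 1 : ℕ) : ZMod n)) := by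
  intro j
  induction j with
  | zero => intro _; norm_num
  | succ j ih =>
    intro h
    have hfi : fX n s (n - 2*s + 1 + j) = n - 2*s + 1 + (j+1) := by
      unfold fX; split_ifs <;> omega
    have hstep := stepX hs hn c (show n - 2*s + 1 + j < n by omega)
    rw [hfi] at hstep
    rw [hstep]
    exact ih (by omega)

lemma T2X (hs : 3 ≤ s) (hn : 2*s+1 ≤ n) (c : ZMod n) : (factor (toFun c (fX n s))).connectedComponentMk (c + ((n - 1 : ℕ) : ZMod n)) =
    (factor (toFun c (fX n s))).connectedComponentMk (c + ((n - 2*s + 1 : ℕ) : ZMod n)) := by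
  have hfi : fX n s (n - s - 1) = n - 1 := by unfold fX; split_ifs <;> omega
  have hstep := stepX hs hn c (show n - s - 1 < n by omega)
  rw [hfi] at hstep
  rw [hstep]
  have h := T1X hs hn c (s - 2) le_rfl
  have e : n - 2*s + 1 + (s - 2) = n - s - 1 := by omega
  rwa [e] at h

lemma T3X (hs : 3 ≤ s) (hn : 2*s+1 ≤ n) (c : ZMod n) : ∀ j, j ≤ s - 2 →
    (factor (toFun c (fX n s))).connectedComponentMk (c + ((n - 1 - j : ℕ) : ZMod n)) =
      (factor (toFun c (fX n s))).connectedComponentMk (c + ((n - 2*s + 1 : ℕ) : ZMod n)) := by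
  intro j
  induction j with
  | zero => intro _; exact T2X hs hn c
  | succ j ih =>
    intro h
    have hfi : fX n s (n - 1 - j) = n - 1 - (j+1) := by
      unfold fX; split_ifs <;> omega
    have hstep := stepX hs hn c (show n - 1 - j < n by omega)
    rw [hfi] at hstep
    rw [hstep]
    exact ih (by omega)

lemma coverXU (hs : 3 ≤ s) (hn : 2*s+1 ≤ n) (c : ZMod n) : ∀ k < n, (k < n - 2*s + 1 ∨ k = n - s) →
    (factor (toFun c (fX n s))).connectedComponentMk (c + ((k : ℕ) : ZMod n)) =
      (factor (toFun c (fX n s))).connectedComponentMk c := by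
  intro k hk hreg
  rcases hreg with h | rfl
  · exact U1X hs hn c k h
  · exact U2X hs hn c

lemma coverXL (hs : 3 ≤ s) (hn : 2*s+1 ≤ n) (c : ZMod n) : ∀ k < n, ¬(k < n - 2*s + 1 ∨ k = n - s) →
    (factor (toFun c (fX n s))).connectedComponentMk (c + ((k : ℕ) : ZMod n)) =
      (factor (toFun c (fX n s))).connectedComponentMk (c + ((n - 2*s + 1 : ℕ) : ZMod n)) := by
  intro k hk hreg
  push_neg at hreg
  obtain ⟨h1, h2⟩ := hreg
  by_cases hc : k ≤ n - s - 1
  · have h := T1X hs hn c (k - (n - 2*s + 1)) (by omega)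
    have e : n - 2*s + 1 + (k - (n - 2*s + 1)) = k := by omega
    rwa [e] at h
  · have h := T3X hs hn c (n - 1 - k) (by omega)
    have e : n - 1 - (n - 1 - k) = k := by omega
    rwa [e] at h

lemma chaseX (hs : 3 ≤ s) (hn : 2*s+1 ≤ n) (hgcd : Nat.gcd n s = 1) :
    ∀ δ : ZMod n, δ ≠ 0 →
      (∀ z : ZMod n, (z.val < n - 2*s + 1 ∨ z.val = n - s) ↔
        ((z + δ).val < n - 2*s + 1 ∨ (z + δ).val = n - s)) → False := by
  intro δ hδ hinv
  set e := δ.val with hedef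
  have he : e < n := ZMod.val_lt δ
  have he0 : 0 < e := by
    rcases Nat.eq_zero_or_pos e with h | h
    · exact absurd ((ZMod.val_eq_zero δ).1 h) hδ
    · exact h
  have hcast : ((e : ℕ) : ZMod n) = δ := ZMod.natCast_rightInverse δ
  have hneg1 : ((n - 1 : ℕ) : ZMod n) = -1 := by
    rw [Nat.cast_sub (by omega : 1 ≤ n), ZMod.natCast_self, Nat.cast_one, zero_sub]
  have hvneg1 : (-1 : ZMod n).val = n - 1 := by
    rw [← hneg1]; exact ZMod.val_cast_of_lt (by omega)
  have notP1 : ¬ ((-1 : ZMod n).val < n - 2*s + 1 ∨ (-1 : ZMod n).val = n - s) := by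
    rw [hvneg1]; omega
  -- step 2
  have hadd : ((n - 1 - e : ℕ) : ZMod n) + δ = -1 := by
    rw [← hcast, ← Nat.cast_add, show n - 1 - e + e = n - 1 by omega, hneg1]
  have h2 := hinv ((n - 1 - e : ℕ) : ZMod n)
  rw [hadd] at h2
  have hv2 : (((n - 1 - e : ℕ) : ZMod n)).val = n - 1 - e := ZMod.val_cast_of_lt (by omega)
  rw [hv2] at h2
  have hx : ¬ (n - 1 - e < n - 2*s + 1 ∨ n - 1 - e = n - s) := fun hcon => notP1 (h2.1 hcon)
  have hebound : e ≤ 2*s - 2 ∧ e ≠ s - 1 := by omega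
  -- step 3
  have h3 := hinv ((n - 2*s : ℕ) : ZMod n)
  have hv3 : (((n - 2*s : ℕ) : ZMod n)).val = n - 2*s := ZMod.val_cast_of_lt (by omega)
  have hadd3 : ((n - 2*s : ℕ) : ZMod n) + δ = ((n - 2*s + e : ℕ) : ZMod n) := by
    rw [← hcast, ← Nat.cast_add]
  rw [hv3, hadd3] at h3
  have hv4 : (((n - 2*s + e : ℕ) : ZMod n)).val = n - 2*s + e := ZMod.val_cast_of_lt (by omega)
  rw [hv4] at h3
  have hP3 := h3.1 (by omega)
  have hes : e = s := by omega
  have hδs : δ = (s : ZMod n) := by rw [← hcast, hes]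
  -- step 4
  have hcop : Nat.Coprime s n := (Nat.coprime_comm.mp hgcd)
  have hu : IsUnit ((s : ℕ) : ZMod n) := (ZMod.isUnit_iff_coprime s n).2 hcop
  obtain ⟨t, ht⟩ := hu.exists_left_inv
  have hiter : ∀ (m : ℕ) (z : ZMod n),
      (z.val < n - 2*s + 1 ∨ z.val = n - s) → (((z + m • δ)).val < n - 2*s + 1 ∨ (z + m • δ).val = n - s) := by
    intro m
    induction m with
    | zero => intro z hz; simpa using hz
    | succ m ih =>
      intro z hz
      have h := (hinv (z + m • δ)).1 (ih z hz)
      rwa [succ_nsmul, ← add_assoc]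
  have hP0 : ((0 : ZMod n)).val < n - 2*s + 1 ∨ ((0 : ZMod n)).val = n - s := by
    left; rw [ZMod.val_zero]; omega
  have hfin := hiter ((-t : ZMod n)).val 0 hP0
  have hmt : ((((-t : ZMod n)).val : ℕ) : ZMod n) = -t := ZMod.natCast_rightInverse _
  rw [zero_add, nsmul_eq_mul, hmt, hδs] at hfin
  have : -t * (s : ZMod n) = -1 := by rw [neg_mul, ht]
  rw [this] at hfin
  exact notP1 hfin

lemma caseX (hs : 3 ≤ s) (hn : 2*s+1 ≤ n) (hgcd : Nat.gcd n s = 1) :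
    SpanningCyclable (circulantGraph ({1, -1, (s : ZMod n), -(s : ZMod n)} : Set (ZMod n))) 2 := by
  intro A hA
  classical
  obtain ⟨a, b, hab, rfl⟩ := Finset.card_eq_two.1 hA
  obtain ⟨c, hPb, hPa⟩ := exists_shift
    (fun z : ZMod n => z.val < n - 2*s + 1 ∨ z.val = n - s) a b hab (chaseX hs hn hgcd)
  refine assemble rfl hab (toFun c (fX n s)) (toFun c (gX n s))
    (toFun_inv (fX_lt hs hn) (gX_fX hs hn))
    (toFun_inv (gX_lt hs hn) (fX_gX hs hn))
    (toFun_ne (fX_lt hs hn) (fX_ne hs hn))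
    (toFun_ne2 (fX_lt hs hn) (fX_ne2 hs hn))
    ?_ (fun z => (z - c).val < n - 2*s + 1 ∨ (z - c).val = n - s)
    (fun z => toFun_invariant (fX_lt hs hn) (fX_inv hs hn) z) hPa hPb ?_
  · -- adjacency
    intro z
    set k := (z - c).val with hkdef
    have hk : k < n := ZMod.val_lt _
    have hz : c + ((k : ℕ) : ZMod n) = z := (eq_c_add c z).symm
    rw [← hz, toFun_apply c _ hk, circ_adj]
    constructor
    · intro hcon
      exact fX_ne hs hn k hk (cast_inj_of_lt (fX_lt hs hn k hk) hk (add_left_cancel hcon.symm))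
    · right
      have : c + ((fX n s k : ℕ) : ZMod n) - (c + ((k : ℕ) : ZMod n)) =
          ((fX n s k : ℕ) : ZMod n) - ((k : ℕ) : ZMod n) := by ring
      rw [this]
      exact fX_adj hs hn k hk
  · -- covering
    have hmb : (factor (toFun c (fX n s))).connectedComponentMk b =
        (factor (toFun c (fX n s))).connectedComponentMk c := by
      have hkb : (b - c).val < n := ZMod.val_lt _
      have := coverXU hs hn c ((b - c).val) hkb hPb
      rwa [← eq_c_add c b] at this
    have hma : (factor (toFun c (fX n s))).connectedComponentMk a =
        (factor (toFun c (fX n s))).connectedComponentMk (c + ((n - 2*s + 1 : ℕ) : ZMod n)) := by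
      have hka : (a - c).val < n := ZMod.val_lt _
      have := coverXL hs hn c ((a - c).val) hka hPa
      rwa [← eq_c_add c a] at this
    intro z
    have hkz : (z - c).val < n := ZMod.val_lt _
    by_cases hreg : (z - c).val < n - 2*s + 1 ∨ (z - c).val = n - s
    · right
      have := coverXU hs hn c ((z - c).val) hkz hreg
      rw [← eq_c_add c z] at this
      rw [this, hmb]
    · left
      have := coverXL hs hn c ((z - c).val) hkz hreg
      rw [← eq_c_add c z] at this
      rw [this, hma]

end ConstrX

section Constr2

def f2 (n k : ℕ) : ℕ :=
  if n - 3 ≤ k then (if k = n-1 then n-3 else k+1)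
  else if k % 2 = 0 then (if k = n-5 then n-4 else k+2)
  else if k = 1 then 0 else k-2

def g2 (n k : ℕ) : ℕ :=
  if n - 3 ≤ k then (if k = n-3 then n-1 else k-1)
  else if k % 2 = 0 then (if k = 0 then 1 else k-2)
  else if k = n-4 then n-5 else k+2

variable {n : ℕ}

lemma f2_lt (hn : 7 ≤ n) (ho : n % 2 = 1) : ∀ k < n, f2 n k < n := by
  intro k hk; unfold f2; split_ifs <;> omega

lemma g2_lt (hn : 7 ≤ n) (ho : n % 2 = 1) : ∀ k < n, g2 n k < n := by
  intro k hk; unfold g2; split_ifs <;> omega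

lemma g2_f2 (hn : 7 ≤ n) (ho : n % 2 = 1) : ∀ k < n, g2 n (f2 n k) = k := by
  intro k hk; unfold f2
  split_ifs <;> (unfold g2; split_ifs <;> first | omega | exact absurd rfl (by omega) | exact (by assumption : False).elim)

lemma f2_g2 (hn : 7 ≤ n) (ho : n % 2 = 1) : ∀ k < n, f2 n (g2 n k) = k := by
  intro k hk; unfold g2
  split_ifs <;> (unfold f2; split_ifs <;> first | omega | exact absurd rfl (by omega) | exact (by assumption : False).elim)

lemma f2_ne (hn : 7 ≤ n) (ho : n % 2 = 1) : ∀ k < n, f2 n k ≠ k := by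
  intro k hk; unfold f2; split_ifs <;> omega

lemma f2_ne_g2 (hn : 7 ≤ n) (ho : n % 2 = 1) : ∀ k < n, f2 n k ≠ g2 n k := by
  intro k hk; unfold f2 g2; split_ifs <;> omega

lemma f2_ne2 (hn : 7 ≤ n) (ho : n % 2 = 1) : ∀ k < n, f2 n (f2 n k) ≠ k := by
  intro k hk hcon
  have h1 : f2 n k < n := f2_lt hn ho k hk
  have h2 : g2 n (f2 n (f2 n k)) = f2 n k := g2_f2 hn ho _ h1
  rw [hcon] at h2
  exact f2_ne_g2 hn ho k hk h2.symm

lemma f2_inv (hn : 7 ≤ n) (ho : n % 2 = 1) : ∀ k < n, (k < n - 3 ↔ f2 n k < n - 3) := by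
  intro k hk; unfold f2; split_ifs <;> omega

lemma f2_adj [NeZero n] (hn : 7 ≤ n) (ho : n % 2 = 1) : ∀ k < n,
    ((f2 n k : ℕ) : ZMod n) - (k : ℕ) ∈
      ({1, -1, ((2:ℕ) : ZMod n), -((2:ℕ) : ZMod n)} : Set (ZMod n)) := by
  intro k hk
  unfold f2
  split_ifs with h1 h2 h3 h4 h5
  · -- k = n-1 → n-3 : diff -2
    subst h2
    have e : ((n - 1 : ℕ) : ZMod n) - ((n - 3 : ℕ) : ZMod n) = ((2:ℕ) : ZMod n) := by
      rw [← Nat.cast_sub (by omega : n - 3 ≤ n - 1)]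
      congr 1; omega
    have e2 : ((n - 3 : ℕ) : ZMod n) - ((n - 1 : ℕ) : ZMod n) = -((2:ℕ) : ZMod n) := by
      rw [← e]; ring
    rw [e2]; simp
  · -- k+1
    have e : ((k + 1 : ℕ) : ZMod n) - (k : ℕ) = (1 : ZMod n) := by push_cast; ring
    rw [e]; simp
  · -- n-5 → n-4 : diff 1
    subst h4
    have e : ((n - 4 : ℕ) : ZMod n) - ((n - 5 : ℕ) : ZMod n) = (1 : ZMod n) := by
      rw [← Nat.cast_sub (by omega : n - 5 ≤ n - 4), show n - 4 - (n - 5) = 1 by omega]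
      norm_num
    rw [e]; simp
  · -- k+2
    have e : ((k + 2 : ℕ) : ZMod n) - (k : ℕ) = ((2:ℕ) : ZMod n) := by push_cast; ring
    rw [e]; simp
  · -- 1 → 0 : diff -1
    subst h5
    have e : ((0 : ℕ) : ZMod n) - ((1 : ℕ) : ZMod n) = (-1 : ZMod n) := by push_cast; ring
    rw [e]; simp
  · -- k-2
    have e : ((k - 2 : ℕ) : ZMod n) - (k : ℕ) = -((2:ℕ) : ZMod n) := by
      rw [Nat.cast_sub (by omega : 2 ≤ k)]; push_cast; ring
    rw [e]; simp

variable [NeZero n]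

lemma step2 (hn : 7 ≤ n) (ho : n % 2 = 1) (c : ZMod n) {k : ℕ} (hk : k < n) :
    (factor (toFun c (f2 n))).connectedComponentMk (c + ((f2 n k : ℕ) : ZMod n)) =
      (factor (toFun c (f2 n))).connectedComponentMk (c + (k : ZMod n)) := by
  have h := factor_mk_succ (σ := toFun c (f2 n))
    (toFun_ne (f2_lt hn ho) (f2_ne hn ho)) (c + ((k : ℕ) : ZMod n))
  rwa [toFun_apply c _ hk] at h

lemma E1 (hn : 7 ≤ n) (ho : n % 2 = 1) (c : ZMod n) : ∀ j, 2*j ≤ n - 5 →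
    (factor (toFun c (f2 n))).connectedComponentMk (c + ((2*j : ℕ) : ZMod n)) =
      (factor (toFun c (f2 n))).connectedComponentMk c := by
  intro j
  induction j with
  | zero => intro _; norm_num
  | succ j ih =>
    intro h
    have hfi : f2 n (2*j) = 2*(j+1) := by unfold f2; split_ifs <;> omega
    have hstep := step2 hn ho c (show 2*j < n by omega)
    rw [hfi] at hstep
    rw [hstep]
    exact ih (by omega)

lemma E2 (hn : 7 ≤ n) (ho : n % 2 = 1) (c : ZMod n) :
    (factor (toFun c (f2 n))).connectedComponentMk (c + ((n - 4 : ℕ) : ZMod n)) =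
      (factor (toFun c (f2 n))).connectedComponentMk c := by
  have hfi : f2 n (n - 5) = n - 4 := by unfold f2; split_ifs <;> omega
  have hstep := step2 hn ho c (show n - 5 < n by omega)
  rw [hfi] at hstep
  rw [hstep]
  have h := E1 hn ho c ((n-5)/2) (by omega)
  rwa [show 2 * ((n-5)/2) = n - 5 by omega] at h

lemma E3 (hn : 7 ≤ n) (ho : n % 2 = 1) (c : ZMod n) : ∀ j, 2*j ≤ n - 5 →
    (factor (toFun c (f2 n))).connectedComponentMk (c + ((n - 4 - 2*j : ℕ) : ZMod n)) =
      (factor (toFun c (f2 n))).connectedComponentMk c := by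
  intro j
  induction j with
  | zero => intro _; exact E2 hn ho c
  | succ j ih =>
    intro h
    have hfi : f2 n (n - 4 - 2*j) = n - 4 - 2*(j+1) := by unfold f2; split_ifs <;> omega
    have hstep := step2 hn ho c (show n - 4 - 2*j < n by omega)
    rw [hfi] at hstep
    rw [hstep]
    exact ih (by omega)

lemma cover2U (hn : 7 ≤ n) (ho : n % 2 = 1) (c : ZMod n) : ∀ k < n, k < n - 3 →
    (factor (toFun c (f2 n))).connectedComponentMk (c + ((k : ℕ) : ZMod n)) =
      (factor (toFun c (f2 n))).connectedComponentMk c := by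
  intro k hk hreg
  by_cases hpar : k % 2 = 0
  · have h := E1 hn ho c (k/2) (by omega)
    rwa [show 2 * (k/2) = k by omega] at h
  · have h := E3 hn ho c ((n - 4 - k)/2) (by omega)
    rwa [show n - 4 - 2*((n - 4 - k)/2) = k by omega] at h

lemma cover2T (hn : 7 ≤ n) (ho : n % 2 = 1) (c : ZMod n) : ∀ k < n, ¬ (k < n - 3) →
    (factor (toFun c (f2 n))).connectedComponentMk (c + ((k : ℕ) : ZMod n)) =
      (factor (toFun c (f2 n))).connectedComponentMk (c + ((n - 3 : ℕ) : ZMod n)) := by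
  intro k hk hreg
  have htr1 : (factor (toFun c (f2 n))).connectedComponentMk (c + ((n - 2 : ℕ) : ZMod n)) =
      (factor (toFun c (f2 n))).connectedComponentMk (c + ((n - 3 : ℕ) : ZMod n)) := by
    have hfi : f2 n (n - 3) = n - 2 := by unfold f2; split_ifs <;> omega
    have hstep := step2 hn ho c (show n - 3 < n by omega)
    rwa [hfi] at hstep
  have htr2 : (factor (toFun c (f2 n))).connectedComponentMk (c + ((n - 1 : ℕ) : ZMod n)) =
      (factor (toFun c (f2 n))).connectedComponentMk (c + ((n - 3 : ℕ) : ZMod n)) := by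
    have hfi : f2 n (n - 2) = n - 1 := by unfold f2; split_ifs <;> omega
    have hstep := step2 hn ho c (show n - 2 < n by omega)
    rw [hfi] at hstep
    rw [hstep]
    exact htr1
  rcases (show k = n - 3 ∨ k = n - 2 ∨ k = n - 1 by omega) with rfl | rfl | rfl
  · rfl
  · exact htr1
  · exact htr2

lemma chase2 (hn : 7 ≤ n) (ho : n % 2 = 1) :
    ∀ δ : ZMod n, δ ≠ 0 →
      (∀ z : ZMod n, (z.val < n - 3) ↔ ((z + δ).val < n - 3)) → False := by
  intro δ hδ hinv
  set e := δ.val with hedef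
  have he : e < n := ZMod.val_lt δ
  have he0 : 0 < e := by
    rcases Nat.eq_zero_or_pos e with h | h
    · exact absurd ((ZMod.val_eq_zero δ).1 h) hδ
    · exact h
  have hcast : ((e : ℕ) : ZMod n) = δ := ZMod.natCast_rightInverse δ
  have hneg1 : ((n - 1 : ℕ) : ZMod n) = -1 := by
    rw [Nat.cast_sub (by omega : 1 ≤ n), ZMod.natCast_self, Nat.cast_one, zero_sub]
  have hvneg1 : (-1 : ZMod n).val = n - 1 := by
    rw [← hneg1]; exact ZMod.val_cast_of_lt (by omega)
  have notP1 : ¬ ((-1 : ZMod n).val < n - 3) := by rw [hvneg1]; omega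
  have hadd : ((n - 1 - e : ℕ) : ZMod n) + δ = -1 := by
    rw [← hcast, ← Nat.cast_add, show n - 1 - e + e = n - 1 by omega, hneg1]
  have h2 := hinv ((n - 1 - e : ℕ) : ZMod n)
  rw [hadd] at h2
  have hv2 : (((n - 1 - e : ℕ) : ZMod n)).val = n - 1 - e := ZMod.val_cast_of_lt (by omega)
  rw [hv2] at h2
  have hx : ¬ (n - 1 - e < n - 3) := fun hcon => notP1 (h2.1 hcon)
  have hebound : e ≤ 2 := by omega
  have h3 := hinv ((n - 4 : ℕ) : ZMod n)
  have hv3 : (((n - 4 : ℕ) : ZMod n)).val = n - 4 := ZMod.val_cast_of_lt (by omega)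
  have hadd3 : ((n - 4 : ℕ) : ZMod n) + δ = ((n - 4 + e : ℕ) : ZMod n) := by
    rw [← hcast, ← Nat.cast_add]
  rw [hv3, hadd3] at h3
  have hv4 : (((n - 4 + e : ℕ) : ZMod n)).val = n - 4 + e := ZMod.val_cast_of_lt (by omega)
  rw [hv4] at h3
  have := h3.1 (by omega)
  omega

lemma case2 (hn : 7 ≤ n) (ho : n % 2 = 1) :
    SpanningCyclable (circulantGraph
      ({1, -1, ((2:ℕ) : ZMod n), -((2:ℕ) : ZMod n)} : Set (ZMod n))) 2 := by
  intro A hA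
  classical
  obtain ⟨a, b, hab, rfl⟩ := Finset.card_eq_two.1 hA
  obtain ⟨c, hPb, hPa⟩ := exists_shift
    (fun z : ZMod n => z.val < n - 3) a b hab (chase2 hn ho)
  refine assemble rfl hab (toFun c (f2 n)) (toFun c (g2 n))
    (toFun_inv (f2_lt hn ho) (g2_f2 hn ho))
    (toFun_inv (g2_lt hn ho) (f2_g2 hn ho))
    (toFun_ne (f2_lt hn ho) (f2_ne hn ho))
    (toFun_ne2 (f2_lt hn ho) (f2_ne2 hn ho))
    ?_ (fun z => (z - c).val < n - 3)
    (fun z => toFun_invariant (f2_lt hn ho) (f2_inv hn ho) z) hPa hPb ?_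
  · intro z
    set k := (z - c).val with hkdef
    have hk : k < n := ZMod.val_lt _
    have hz : c + ((k : ℕ) : ZMod n) = z := (eq_c_add c z).symm
    rw [← hz, toFun_apply c _ hk, circ_adj]
    constructor
    · intro hcon
      exact f2_ne hn ho k hk (cast_inj_of_lt (f2_lt hn ho k hk) hk (add_left_cancel hcon.symm))
    · right
      have e : c + ((f2 n k : ℕ) : ZMod n) - (c + ((k : ℕ) : ZMod n)) =
          ((f2 n k : ℕ) : ZMod n) - ((k : ℕ) : ZMod n) := by ring
      rw [e]
      exact f2_adj hn ho k hk
  · have hmb : (factor (toFun c (f2 n))).connectedComponentMk b =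
        (factor (toFun c (f2 n))).connectedComponentMk c := by
      have hkb : (b - c).val < n := ZMod.val_lt _
      have := cover2U hn ho c ((b - c).val) hkb hPb
      rwa [← eq_c_add c b] at this
    have hma : (factor (toFun c (f2 n))).connectedComponentMk a =
        (factor (toFun c (f2 n))).connectedComponentMk (c + ((n - 3 : ℕ) : ZMod n)) := by
      have hka : (a - c).val < n := ZMod.val_lt _
      have := cover2T hn ho c ((a - c).val) hka hPa
      rwa [← eq_c_add c a] at this
    intro z
    have hkz : (z - c).val < n := ZMod.val_lt _
    by_cases hreg : (z - c).val < n - 3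
    · right
      have := cover2U hn ho c ((z - c).val) hkz hreg
      rw [← eq_c_add c z] at this
      rw [this, hmb]
    · left
      have := cover2T hn ho c ((z - c).val) hkz hreg
      rw [← eq_c_add c z] at this
      rw [this, hma]

end Constr2

/-- a graph on 5 vertices has no 2-factor with exactly 2 cycles -/
lemma no_five {V : Type*} [Fintype V] [DecidableEq V] (hV : Fintype.card V = 5)
    (X : SimpleGraph V) : ¬ SpanningCyclable X 2 := by
  intro hcyc
  have h2 : 1 < Fintype.card V := by omega
  obtain ⟨a, b, hab⟩ := Fintype.exists_pair_of_one_lt_card h2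
  have hA : ({a, b} : Finset V).card = 2 := by
    rw [Finset.card_insert_of_notMem (by simpa using hab), Finset.card_singleton]
  obtain ⟨H, ⟨hle, hdeg⟩, hsep⟩ := hcyc {a, b} hA
  classical
  have h3 : ∀ v : V,
      3 ≤ (Finset.univ.filter
        (fun z => H.connectedComponentMk z = H.connectedComponentMk v)).card := by
    intro v
    obtain ⟨x, y, hxy, hnb⟩ := Set.ncard_eq_two.1 (hdeg v)
    have hx : H.Adj v x := by
      have : x ∈ H.neighborSet v := by rw [hnb]; simp
      exact this
    have hy : H.Adj v y := by
      have : y ∈ H.neighborSet v := by rw [hnb]; simp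
      exact this
    have hsub : ({v, x, y} : Finset V) ⊆ Finset.univ.filter
        (fun z => H.connectedComponentMk z = H.connectedComponentMk v) := by
      intro z hz
      simp only [Finset.mem_insert, Finset.mem_singleton] at hz
      simp only [Finset.mem_filter, Finset.mem_univ, true_and]
      rcases hz with rfl | rfl | rfl
      · rfl
      · exact ConnectedComponent.sound hx.reachable.symm
      · exact ConnectedComponent.sound hy.reachable.symm
    have hcard : ({v, x, y} : Finset V).card = 3 := by
      rw [Finset.card_insert_of_notMem, Finset.card_insert_of_notMem, Finset.card_singleton]
      · simpa using hxy
      · simp only [Finset.mem_insert, Finset.mem_singleton]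
        push_neg
        exact ⟨H.ne_of_adj hx, H.ne_of_adj hy⟩
    calc 3 = ({v, x, y} : Finset V).card := hcard.symm
    _ ≤ _ := Finset.card_le_card hsub
  have hmkab : H.connectedComponentMk a ≠ H.connectedComponentMk b := by
    intro h
    obtain ⟨u, hu, huniq⟩ := hsep (H.connectedComponentMk a)
    have ha' := huniq a ⟨by simp, rfl⟩
    have hb' := huniq b ⟨by simp, h.symm ▸ rfl⟩
    exact hab (ha'.trans hb'.symm)
  have hdisj : Disjoint
      (Finset.univ.filter (fun z => H.connectedComponentMk z = H.connectedComponentMk a))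
      (Finset.univ.filter (fun z => H.connectedComponentMk z = H.connectedComponentMk b)) := by
    rw [Finset.disjoint_filter]
    intro z _ hza hzb
    exact hmkab (hza ▸ hzb ▸ rfl)
  have hunion := Finset.card_union_of_disjoint hdisj
  have hle5 : (Finset.univ.filter (fun z => H.connectedComponentMk z = H.connectedComponentMk a) ∪
      Finset.univ.filter (fun z => H.connectedComponentMk z = H.connectedComponentMk b)).card ≤ 5 := by
    calc _ ≤ (Finset.univ : Finset V).card := Finset.card_le_card (Finset.subset_univ _)
    _ = 5 := by rw [Finset.card_univ, hV]
  have := h3 a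
  have := h3 b
  omega

theorem statement_15' (n s : ℕ) (hs : 2 ≤ s) (hgcd : Nat.gcd n s = 1) (hns : 2 * s ≤ n) :
    SpanningCyclable
        (circulantGraph ({1, -1, (s : ZMod n), -(s : ZMod n)} : Set (ZMod n))) 2 ↔
      6 ≤ n := by
  have hn1 : 2*s + 1 ≤ n := by
    rcases Nat.lt_or_ge (2*s) n with h | h
    · omega
    · exfalso
      have hn2s : n = 2*s := by omega
      have hdvd : s ∣ Nat.gcd n s := Nat.dvd_gcd (by rw [hn2s]; exact dvd_mul_left s 2) dvd_rfl
      rw [hgcd] at hdvd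
      have := Nat.le_of_dvd one_pos hdvd
      omega
  haveI : NeZero n := ⟨by omega⟩
  constructor
  · intro hcyc
    by_contra hlt
    push_neg at hlt
    obtain rfl : n = 5 := by omega
    obtain rfl : s = 2 := by omega
    exact no_five (by rw [ZMod.card]) _ hcyc
  · intro h6
    by_cases hs3 : 3 ≤ s
    · exact caseX hs3 hn1 hgcd
    · obtain rfl : s = 2 := by omega
      have ho : n % 2 = 1 := by
        rcases Nat.even_or_odd n with he | hodd
        · exfalso
          have hdvd : 2 ∣ Nat.gcd n 2 := Nat.dvd_gcd he.two_dvd dvd_rfl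
          rw [hgcd] at hdvd
          exact absurd (Nat.le_of_dvd one_pos hdvd) (by omega)
        · exact Nat.odd_iff.mp hodd
      exact case2 (by omega) ho

end St15

/-- For integers `s ≥ 2` and `n` with `gcd(n, s) = 1` and `n ≥ 2s`,
the circulant graph `circ(n; ±1, ±s)` is 2-spanning cyclable iff `n ≥ 6`. -/
theorem statement_15 (n s : ℕ) (hs : 2 ≤ s) (hgcd : Nat.gcd n s = 1) (hns : 2 * s ≤ n) :
    SpanningCyclable
        (circulantGraph ({1, -1, (s : ZMod n), -(s : ZMod n)} : Set (ZMod n))) 2 ↔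
      6 ≤ n :=
  St15.statement_15' n s hs hgcd hns
end

section
/- For every n ≥ 5, the circulant graph circ(n; ±1, ±2) is not 3-spanning cyclable; in particular, no 2-factor consisting of three cycles separates the vertices 0, 1 and 2. -/
open SimpleGraph

/-- For every `n ≥ 5`, the circulant graph `circ(n; ±1, ±2)` is not
3-spanning cyclable; in particular no 2-factor consisting of three cycles separates
the vertices `0`, `1` and `2`. -/
theorem statement_16 (n : ℕ) (hn : 5 ≤ n) :
    ¬ SpanningCyclable (circulantGraph ({1, -1, 2, -2} : Set (ZMod n))) 3 ∧
    ¬ ∃ H, IsTwoFactor (circulantGraph ({1, -1, 2, -2} : Set (ZMod n))) H ∧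
        SeparatesSet H {(0 : ZMod n), 1, 2} := by
  haveI : NeZero n := ⟨by omega⟩
  have hk : ∀ k : ℕ, 0 < k → k < n → (k : ZMod n) ≠ 0 := by
    intro k hk1 hk2 h
    have := (ZMod.natCast_eq_zero_iff k n).mp h
    have := Nat.le_of_dvd hk1 this
    omega
  have h1 : (1 : ZMod n) ≠ 0 := by have := hk 1 (by omega) (by omega); exact_mod_cast this
  have h2 : (2 : ZMod n) ≠ 0 := by have := hk 2 (by omega) (by omega); exact_mod_cast this
  have h4 : (4 : ZMod n) ≠ 0 := by have := hk 4 (by omega) (by omega); exact_mod_cast this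
  have h01 : (0 : ZMod n) ≠ 1 := fun h => h1 h.symm
  have h02 : (0 : ZMod n) ≠ 2 := fun h => h2 h.symm
  have h12 : (1 : ZMod n) ≠ 2 := fun h => h1 (by linear_combination -h)
  have h3m1 : (3 : ZMod n) ≠ -1 := fun h => h4 (by linear_combination h)
  have hm1m2 : (-1 : ZMod n) ≠ -2 := fun h => h1 (by linear_combination h)
  set X := circulantGraph ({1, -1, 2, -2} : Set (ZMod n)) with hX
  have key : ¬ ∃ H, IsTwoFactor X H ∧ SeparatesSet H {(0 : ZMod n), 1, 2} := by
    rintro ⟨H, ⟨hle, hdeg⟩, hsep⟩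
    have hne : ∀ a b : ZMod n, a ∈ ({0, 1, 2} : Finset (ZMod n)) →
        b ∈ ({0, 1, 2} : Finset (ZMod n)) →
        H.connectedComponentMk a = H.connectedComponentMk b → a = b := by
      intro a b ha hb h
      obtain ⟨c, _, huniq⟩ := hsep (H.connectedComponentMk b)
      have ha' := huniq a ⟨ha, h⟩
      have hb' := huniq b ⟨hb, rfl⟩
      rw [ha', hb']
    have hadj : ∀ a b : ZMod n, a ∈ ({0, 1, 2} : Finset (ZMod n)) →
        b ∈ ({0, 1, 2} : Finset (ZMod n)) → H.Adj a b → a = b := by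
      intro a b ha hb h
      exact hne a b ha hb (ConnectedComponent.sound h.reachable)
    -- neighbors of 1
    have hsub1 : H.neighborSet 1 ⊆ {(3 : ZMod n), -1} := by
      intro x hx
      have hHx : H.Adj 1 x := hx
      have hXx : X.Adj 1 x := hle hHx
      rw [hX, circulantGraph_adj] at hXx
      obtain ⟨hne', hmem⟩ := hXx
      simp only [Set.mem_insert_iff, Set.mem_singleton_iff] at hmem ⊢
      have hcases : x = 0 ∨ x = 2 ∨ x = 3 ∨ x = -1 := by
        rcases hmem with (h | h | h | h) | (h | h | h | h)
        · exact Or.inl (by linear_combination -h)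
        · exact Or.inr (Or.inl (by linear_combination -h))
        · exact Or.inr (Or.inr (Or.inr (by linear_combination -h)))
        · exact Or.inr (Or.inr (Or.inl (by linear_combination -h)))
        · exact Or.inr (Or.inl (by linear_combination h))
        · exact Or.inl (by linear_combination h)
        · exact Or.inr (Or.inr (Or.inl (by linear_combination h)))
        · exact Or.inr (Or.inr (Or.inr (by linear_combination h)))
      rcases hcases with h | h | h | h
      · exact absurd (hadj 1 x (by simp) (by simp [h]) hHx) (by simp [h, h1])
      · exact absurd (hadj 1 x (by simp) (by simp [h]) hHx) (by simp [h, h12])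
      · exact Or.inl h
      · exact Or.inr h
    have heq1 : H.neighborSet 1 = {(3 : ZMod n), -1} :=
      Set.eq_of_subset_of_ncard_le hsub1
        (by rw [hdeg 1, Set.ncard_pair h3m1]) (Set.toFinite _)
    -- neighbors of 0
    have hsub0 : H.neighborSet 0 ⊆ {(-1 : ZMod n), -2} := by
      intro x hx
      have hHx : H.Adj 0 x := hx
      have hXx : X.Adj 0 x := hle hHx
      rw [hX, circulantGraph_adj] at hXx
      obtain ⟨hne', hmem⟩ := hXx
      simp only [Set.mem_insert_iff, Set.mem_singleton_iff] at hmem ⊢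
      have hcases : x = 1 ∨ x = 2 ∨ x = -1 ∨ x = -2 := by
        rcases hmem with (h | h | h | h) | (h | h | h | h)
        · exact Or.inr (Or.inr (Or.inl (by linear_combination -h)))
        · exact Or.inl (by linear_combination -h)
        · exact Or.inr (Or.inr (Or.inr (by linear_combination -h)))
        · exact Or.inr (Or.inl (by linear_combination -h))
        · exact Or.inl (by linear_combination h)
        · exact Or.inr (Or.inr (Or.inl (by linear_combination h)))
        · exact Or.inr (Or.inl (by linear_combination h))
        · exact Or.inr (Or.inr (Or.inr (by linear_combination h)))
      rcases hcases with h | h | h | h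
      · exact absurd (hadj 0 x (by simp) (by simp [h]) hHx) (by simp [h, h01])
      · exact absurd (hadj 0 x (by simp) (by simp [h]) hHx) (by simp [h, h02])
      · exact Or.inl h
      · exact Or.inr h
    have heq0 : H.neighborSet 0 = {(-1 : ZMod n), -2} :=
      Set.eq_of_subset_of_ncard_le hsub0
        (by rw [hdeg 0, Set.ncard_pair hm1m2]) (Set.toFinite _)
    have hA1 : H.Adj 1 (-1) := by
      have : (-1 : ZMod n) ∈ H.neighborSet 1 := by rw [heq1]; simp
      exact this
    have hA0 : H.Adj 0 (-1) := by
      have : (-1 : ZMod n) ∈ H.neighborSet 0 := by rw [heq0]; simp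
      exact this
    have : H.connectedComponentMk 0 = H.connectedComponentMk 1 := by
      rw [ConnectedComponent.sound hA0.reachable, ConnectedComponent.sound hA1.reachable]
    exact h01 (hne 0 1 (by simp) (by simp) this)
  refine ⟨?_, key⟩
  intro hSC
  exact key (hSC {0, 1, 2} (Finset.card_eq_three.mpr ⟨0, 1, 2, h01, h02, h12, rfl⟩))
end

section
/- Let s ≥ 2. If n = 2s + 1 or n = 2s + 2, then the circulant graph circ(n; ±1, ±s) is not 3-spanning cyclable. -/
open SimpleGraph

private lemma comp_ne {V : Type*} {H : SimpleGraph V} {A : Finset V} (hsep : SeparatesSet H A)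
    {a b : V} (ha : a ∈ A) (hb : b ∈ A) (hab : a ≠ b) :
    H.connectedComponentMk a ≠ H.connectedComponentMk b := by
  intro h
  obtain ⟨x, -, hx⟩ := hsep (H.connectedComponentMk a)
  exact hab ((hx a ⟨ha, rfl⟩).trans (hx b ⟨hb, h.symm⟩).symm)

private lemma adj_comp {V : Type*} {H : SimpleGraph V} {a b : V} (h : H.Adj a b) :
    H.connectedComponentMk a = H.connectedComponentMk b :=
  SimpleGraph.ConnectedComponent.sound h.reachable

private lemma circ_nbr {n : ℕ} (s : ℕ) {v x : ZMod n}
    (h : (circulantGraph ({1, -1, (s : ZMod n), -(s : ZMod n)} : Set (ZMod n))).Adj v x) :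
    x = v + 1 ∨ x = v - 1 ∨ x = v + s ∨ x = v - s := by
  rw [circulantGraph_adj] at h
  obtain ⟨-, h | h⟩ := h <;>
    simp only [Set.mem_insert_iff, Set.mem_singleton_iff] at h <;>
    rcases h with h | h | h | h
  · exact Or.inr (Or.inl (by linear_combination -h))
  · exact Or.inl (by linear_combination -h)
  · exact Or.inr (Or.inr (Or.inr (by linear_combination -h)))
  · exact Or.inr (Or.inr (Or.inl (by linear_combination -h)))
  · exact Or.inl (by linear_combination h)
  · exact Or.inr (Or.inl (by linear_combination h))
  · exact Or.inr (Or.inr (Or.inl (by linear_combination h)))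
  · exact Or.inr (Or.inr (Or.inr (by linear_combination h)))

/-- For `s ≥ 2`, if `n = 2s + 1` or `n = 2s + 2`, then the circulant graph
`circ(n; ±1, ±s)` is not 3-spanning cyclable. -/
theorem statement_17 (s n : ℕ) (hs : 2 ≤ s) (hn : n = 2 * s + 1 ∨ n = 2 * s + 2) :
    ¬ SpanningCyclable
        (circulantGraph ({1, -1, (s : ZMod n), -(s : ZMod n)} : Set (ZMod n))) 3 := by
  intro hSC
  rcases hn with hn | hn <;> subst hn
  -- Case n = 2s+1
  · haveI : NeZero (2*s+1) := ⟨by omega⟩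
    have key : ∀ a b : ℕ, a < 2*s+1 → b < 2*s+1 →
        (a : ZMod (2*s+1)) = (b : ZMod (2*s+1)) → a = b := by
      intro a b ha hb h
      have := congrArg ZMod.val h
      rwa [ZMod.val_cast_of_lt ha, ZMod.val_cast_of_lt hb] at this
    have hne : ∀ a b : ℕ, a < 2*s+1 → b < 2*s+1 → a ≠ b →
        (a : ZMod (2*s+1)) ≠ (b : ZMod (2*s+1)) :=
      fun a b ha hb hab h => hab (key a b ha hb h)
    have e1 : (2*(s:ZMod (2*s+1)) + 1) = 0 := by
      have := ZMod.natCast_self (2*s+1); push_cast at this; linear_combination this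
    have h0s : (0:ZMod (2*s+1)) ≠ (s:ZMod (2*s+1)) := by
      have := hne 0 s (by omega) (by omega) (by omega); simpa using this
    have h02 : (0:ZMod (2*s+1)) ≠ ((2*s:ℕ):ZMod (2*s+1)) := by
      have := hne 0 (2*s) (by omega) (by omega) (by omega); simpa using this
    have hs2 : (s:ZMod (2*s+1)) ≠ ((2*s:ℕ):ZMod (2*s+1)) :=
      hne s (2*s) (by omega) (by omega) (by omega)
    obtain ⟨H, ⟨hle, hdeg⟩, hsep⟩ := hSC
      {0, (s:ZMod (2*s+1)), ((2*s:ℕ):ZMod (2*s+1))}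
      (by
        have h02' : (0:ZMod (2*s+1)) ≠ 2*(s:ZMod (2*s+1)) := by
          rw [show (2*(s:ZMod (2*s+1))) = ((2*s:ℕ):ZMod (2*s+1)) by push_cast; ring]
          exact h02
        have hs2' : (s:ZMod (2*s+1)) ≠ 2*(s:ZMod (2*s+1)) := by
          rw [show (2*(s:ZMod (2*s+1))) = ((2*s:ℕ):ZMod (2*s+1)) by push_cast; ring]
          exact hs2
        rw [Finset.card_insert_of_notMem (by simp [h0s, h02']),
            Finset.card_insert_of_notMem (by simp [hs2']), Finset.card_singleton])
    have ha0 : (0:ZMod (2*s+1)) ∈ ({0, (s:ZMod (2*s+1)), ((2*s:ℕ):ZMod (2*s+1))} : Finset _) := by simp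
    have has : (s:ZMod (2*s+1)) ∈ ({0, (s:ZMod (2*s+1)), ((2*s:ℕ):ZMod (2*s+1))} : Finset _) := by simp
    have ha2 : ((2*s:ℕ):ZMod (2*s+1)) ∈ ({0, (s:ZMod (2*s+1)), ((2*s:ℕ):ZMod (2*s+1))} : Finset _) := by simp
    have hc0s := comp_ne hsep ha0 has h0s
    have hc02 := comp_ne hsep ha0 ha2 h02
    have hcs2 := comp_ne hsep has ha2 hs2
    have c2 : ((s-1:ℕ):ZMod (2*s+1)) = (s:ZMod (2*s+1)) - 1 := by
      have h' : (s-1) + 1 = s := by omega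
      have := congrArg (Nat.cast : ℕ → ZMod (2*s+1)) h'
      push_cast at this; linear_combination this
    have c1 : ((2*s-1:ℕ):ZMod (2*s+1)) = 2*(s:ZMod (2*s+1)) - 1 := by
      have h' : (2*s-1) + 1 = 2*s := by omega
      have := congrArg (Nat.cast : ℕ → ZMod (2*s+1)) h'
      push_cast at this; linear_combination this
    -- neighbors of 0 in H are exactly {1, s+1}
    have hsub0 : H.neighborSet 0 ⊆ {((1:ℕ):ZMod (2*s+1)), ((s+1:ℕ):ZMod (2*s+1))} := by
      intro x hx
      rw [mem_neighborSet] at hx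
      have hcx := adj_comp hx
      simp only [Set.mem_insert_iff, Set.mem_singleton_iff]
      rcases circ_nbr s (hle hx) with h | h | h | h
      · left; push_cast; linear_combination h
      · exfalso
        have hx2 : x = ((2*s:ℕ):ZMod (2*s+1)) := by push_cast; linear_combination h - e1
        rw [hx2] at hcx; exact hc02 hcx
      · exfalso
        have hx2 : x = (s:ZMod (2*s+1)) := by linear_combination h
        rw [hx2] at hcx; exact hc0s hcx
      · right; push_cast; linear_combination h - e1
    have hN0 : H.neighborSet 0 = {((1:ℕ):ZMod (2*s+1)), ((s+1:ℕ):ZMod (2*s+1))} := by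
      apply Set.eq_of_subset_of_ncard_le hsub0
      rw [Set.ncard_pair (hne 1 (s+1) (by omega) (by omega) (by omega)), hdeg 0]
    have hcomp_s1 : H.connectedComponentMk 0 = H.connectedComponentMk ((s+1:ℕ):ZMod (2*s+1)) := by
      have hm : ((s+1:ℕ):ZMod (2*s+1)) ∈ H.neighborSet 0 := by rw [hN0]; simp
      rw [mem_neighborSet] at hm
      exact adj_comp hm
    -- neighbors of 2s in H are exactly {2s-1, s-1}
    have hsub2 : H.neighborSet ((2*s:ℕ):ZMod (2*s+1)) ⊆
        {((2*s-1:ℕ):ZMod (2*s+1)), ((s-1:ℕ):ZMod (2*s+1))} := by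
      intro x hx
      rw [mem_neighborSet] at hx
      have hcx := adj_comp hx
      simp only [Set.mem_insert_iff, Set.mem_singleton_iff]
      rcases circ_nbr s (hle hx) with h | h | h | h
      · exfalso
        have hx2 : x = 0 := by push_cast at h; linear_combination h + e1
        rw [hx2] at hcx; exact hc02 hcx.symm
      · left; rw [c1]; push_cast at h ⊢; linear_combination h
      · right; rw [c2]; push_cast at h ⊢; linear_combination h + e1
      · exfalso
        have hx2 : x = (s:ZMod (2*s+1)) := by push_cast at h; linear_combination h
        rw [hx2] at hcx; exact hcs2 hcx.symm
    have hN2 : H.neighborSet ((2*s:ℕ):ZMod (2*s+1)) =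
        {((2*s-1:ℕ):ZMod (2*s+1)), ((s-1:ℕ):ZMod (2*s+1))} := by
      apply Set.eq_of_subset_of_ncard_le hsub2
      rw [Set.ncard_pair (hne (2*s-1) (s-1) (by omega) (by omega) (by omega)), hdeg _]
    have hcomp_sm1 : H.connectedComponentMk ((2*s:ℕ):ZMod (2*s+1)) =
        H.connectedComponentMk ((s-1:ℕ):ZMod (2*s+1)) := by
      have hm : ((s-1:ℕ):ZMod (2*s+1)) ∈ H.neighborSet ((2*s:ℕ):ZMod (2*s+1)) := by
        rw [hN2]; simp
      rw [mem_neighborSet] at hm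
      exact adj_comp hm
    -- vertex s has no available neighbor
    have hnon : (H.neighborSet (s:ZMod (2*s+1))).Nonempty := by
      rw [← Set.ncard_pos (Set.toFinite _), hdeg]; omega
    obtain ⟨x, hx⟩ := hnon
    rw [mem_neighborSet] at hx
    have hcx := adj_comp hx
    rcases circ_nbr s (hle hx) with h | h | h | h
    · have hx2 : x = ((s+1:ℕ):ZMod (2*s+1)) := by push_cast; linear_combination h
      rw [hx2] at hcx
      exact hc0s (hcomp_s1.trans hcx.symm)
    · have hx2 : x = ((s-1:ℕ):ZMod (2*s+1)) := by rw [c2]; linear_combination h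
      rw [hx2] at hcx
      exact hcs2 (hcx.trans hcomp_sm1.symm)
    · have hx2 : x = ((2*s:ℕ):ZMod (2*s+1)) := by push_cast; linear_combination h
      rw [hx2] at hcx; exact hcs2 hcx
    · have hx2 : x = 0 := by linear_combination h
      rw [hx2] at hcx; exact hc0s hcx.symm
  -- Case n = 2s+2
  · haveI : NeZero (2*s+2) := ⟨by omega⟩
    have key : ∀ a b : ℕ, a < 2*s+2 → b < 2*s+2 →
        (a : ZMod (2*s+2)) = (b : ZMod (2*s+2)) → a = b := by
      intro a b ha hb h
      have := congrArg ZMod.val h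
      rwa [ZMod.val_cast_of_lt ha, ZMod.val_cast_of_lt hb] at this
    have hne : ∀ a b : ℕ, a < 2*s+2 → b < 2*s+2 → a ≠ b →
        (a : ZMod (2*s+2)) ≠ (b : ZMod (2*s+2)) :=
      fun a b ha hb hab h => hab (key a b ha hb h)
    have e1 : (2*(s:ZMod (2*s+2)) + 2) = 0 := by
      have := ZMod.natCast_self (2*s+2); push_cast at this; linear_combination this
    have h01 : (0:ZMod (2*s+2)) ≠ ((1:ℕ):ZMod (2*s+2)) := by
      have := hne 0 1 (by omega) (by omega) (by omega); simpa using this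
    have h0p : (0:ZMod (2*s+2)) ≠ ((s+1:ℕ):ZMod (2*s+2)) := by
      have := hne 0 (s+1) (by omega) (by omega) (by omega); simpa using this
    have h1p : ((1:ℕ):ZMod (2*s+2)) ≠ ((s+1:ℕ):ZMod (2*s+2)) :=
      hne 1 (s+1) (by omega) (by omega) (by omega)
    obtain ⟨H, ⟨hle, hdeg⟩, hsep⟩ := hSC
      {0, ((1:ℕ):ZMod (2*s+2)), ((s+1:ℕ):ZMod (2*s+2))}
      (by
        have h01' : (0:ZMod (2*s+2)) ≠ 1 := by simpa using h01
        have h0p' : (0:ZMod (2*s+2)) ≠ (s:ZMod (2*s+2)) + 1 := by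
          rw [show ((s:ZMod (2*s+2)) + 1) = ((s+1:ℕ):ZMod (2*s+2)) by push_cast; ring]
          exact h0p
        have hsne0 : (s:ZMod (2*s+2)) ≠ 0 := by
          have := hne s 0 (by omega) (by omega) (by omega); simpa using this
        rw [Finset.card_insert_of_notMem (by simp [h01', h0p']),
            Finset.card_insert_of_notMem (by simp [hsne0]), Finset.card_singleton])
    have ha0 : (0:ZMod (2*s+2)) ∈
        ({0, ((1:ℕ):ZMod (2*s+2)), ((s+1:ℕ):ZMod (2*s+2))} : Finset _) := by simp
    have ha1 : ((1:ℕ):ZMod (2*s+2)) ∈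
        ({0, ((1:ℕ):ZMod (2*s+2)), ((s+1:ℕ):ZMod (2*s+2))} : Finset _) := by simp
    have hap : ((s+1:ℕ):ZMod (2*s+2)) ∈
        ({0, ((1:ℕ):ZMod (2*s+2)), ((s+1:ℕ):ZMod (2*s+2))} : Finset _) := by simp
    have hc01 := comp_ne hsep ha0 ha1 h01
    have hc0p := comp_ne hsep ha0 hap h0p
    have hc1p := comp_ne hsep ha1 hap h1p
    set P : Set (ZMod (2*s+2)) :=
      {(s:ZMod (2*s+2)), ((s+2:ℕ):ZMod (2*s+2)), ((2*s+1:ℕ):ZMod (2*s+2))} with hP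
    have hsub0 : H.neighborSet 0 ⊆ P := by
      intro x hx
      rw [mem_neighborSet] at hx
      have hcx := adj_comp hx
      rw [hP]; simp only [Set.mem_insert_iff, Set.mem_singleton_iff]
      rcases circ_nbr s (hle hx) with h | h | h | h
      · exfalso
        have hx2 : x = ((1:ℕ):ZMod (2*s+2)) := by push_cast; linear_combination h
        rw [hx2] at hcx; exact hc01 hcx
      · right; right; push_cast; linear_combination h - e1
      · left; linear_combination h
      · right; left; push_cast; linear_combination h - e1
    have hsubp : H.neighborSet ((s+1:ℕ):ZMod (2*s+2)) ⊆ P := by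
      intro x hx
      rw [mem_neighborSet] at hx
      have hcx := adj_comp hx
      rw [hP]; simp only [Set.mem_insert_iff, Set.mem_singleton_iff]
      rcases circ_nbr s (hle hx) with h | h | h | h
      · right; left; push_cast at h ⊢; linear_combination h
      · left; push_cast at h; linear_combination h
      · right; right; push_cast at h ⊢; linear_combination h
      · exfalso
        have hx2 : x = ((1:ℕ):ZMod (2*s+2)) := by push_cast at h ⊢; linear_combination h
        rw [hx2] at hcx; exact hc1p hcx.symm
    have hdisj : Disjoint (H.neighborSet 0) (H.neighborSet ((s+1:ℕ):ZMod (2*s+2))) := by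
      rw [Set.disjoint_left]
      intro x h0 h1
      rw [mem_neighborSet] at h0 h1
      exact hc0p ((adj_comp h0).trans
        (adj_comp h1).symm)
    have hunion : (H.neighborSet 0 ∪ H.neighborSet ((s+1:ℕ):ZMod (2*s+2))).ncard = 4 := by
      rw [Set.ncard_union_eq hdisj (Set.toFinite _) (Set.toFinite _), hdeg, hdeg]
    have hle3 : (H.neighborSet 0 ∪ H.neighborSet ((s+1:ℕ):ZMod (2*s+2))).ncard ≤ 3 := by
      refine (Set.ncard_le_ncard (Set.union_subset hsub0 hsubp) (Set.toFinite _)).trans ?_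
      rw [hP]
      refine (Set.ncard_insert_le _ _).trans ?_
      have h2 : ({((s+2:ℕ):ZMod (2*s+2)), ((2*s+1:ℕ):ZMod (2*s+2))} : Set (ZMod (2*s+2))).ncard ≤ 2 := by
        refine (Set.ncard_insert_le _ _).trans ?_
        rw [Set.ncard_singleton]
      omega
    omega
end
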